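/- arXiv:1504.06680 — 6 statements merged into one kernel-verified Lean document; each statement's English description precedes it below -/
import Mathlib

section
/- Let G be a group and S a finite generating set of G. Then the end space of the Cayley graph Γ(G,S) is either empty, has exactly one element, has exactly two elements, or is infinite. (The Freudenthal–Hopf theorem: the number of ends e(G) of a finitely generated group is 0, 1, 2 or ∞.) -/
/-- The Cayley graph of a group `G` with respect to a set `S ⊆ G`:
two distinct elements `g h` are adjacent iff `g⁻¹ * h ∈ S ∪ S⁻¹`. -/
def cayleyGraph {G : Type*} [Group G] (S : Set G) : SimpleGraph G where
  Adj g h := g ≠ h ∧ g⁻¹ * h ∈ S ∪ S⁻¹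
  symm := by
    constructor
    rintro g h ⟨hne, hmem⟩
    refine ⟨hne.symm, ?_⟩
    rcases hmem with h1 | h1
    · exact Or.inr (Set.mem_inv.mpr (by rwa [show (h⁻¹ * g)⁻¹ = g⁻¹ * h by group]))
    · have := Set.mem_inv.mp h1
      exact Or.inl (by rwa [show (g⁻¹ * h)⁻¹ = h⁻¹ * g by group] at this)
  loopless := ⟨fun g h => h.1 rfl⟩


open SimpleGraph

universe u
variable {V : Type u} {Γ : SimpleGraph V}

/-- Transfer reachability between induced subgraphs, given that the walk's support
lies in the second set. -/
lemma reachable_induce_of_support {A B : Set V} {x y : A}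
    (w : (Γ.induce A).Walk x y) (hB : ∀ u ∈ w.support, (u : V) ∈ B) :
    (Γ.induce B).Reachable ⟨x, hB x w.start_mem_support⟩ ⟨y, hB y w.end_mem_support⟩ := by
  induction w with
  | nil => exact Reachable.refl _
  | @cons a b c hab w ih =>
    have hb : (b : V) ∈ B := hB b (by simp)
    have h1 : (Γ.induce B).Adj ⟨a, hB a (by simp)⟩ ⟨b, hb⟩ := by
      simp only [comap_adj, Function.Embedding.coe_subtype] at hab ⊢
      exact hab
    exact h1.reachable.trans (ih (fun u hu => hB u (by simp [hu])))

/-- Every vertex on a walk in `Γ.induce Kᶜ` starting at `v` lies in the component of `v`. -/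
lemma walk_support_subset_supp {K : Set V} {x y : (Kᶜ : Set V)}
    (w : (Γ.induce (Kᶜ : Set V)).Walk x y) (u : (Kᶜ : Set V)) (hu : u ∈ w.support) :
    (u : V) ∈ (Γ.componentComplMk x.2 : Γ.ComponentCompl K) := by
  classical
  refine ⟨u.2, ?_⟩
  have : (Γ.induce (Kᶜ : Set V)).Reachable u x := ((w.takeUntil u hu).reverse).reachable
  exact ConnectedComponent.sound (by simpa using this)

/-- If a component outside `L` avoids the bigger set `K'`, it is (the support of)
a component outside `K'`. -/
lemma exists_componentCompl_supp_eq {L K' : Set V} (hLK' : L ⊆ K')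
    (D : Γ.ComponentCompl L) (hd : Disjoint D.supp K') :
    ∃ D' : Γ.ComponentCompl K', D'.supp = D.supp := by
  obtain ⟨v, hvL, rfl⟩ := D.exists_eq_mk
  have hvD : v ∈ (Γ.componentComplMk hvL).supp := Γ.componentComplMk_mem hvL
  have hvK' : v ∉ K' := fun h => hd.ne_of_mem hvD h rfl
  refine ⟨Γ.componentComplMk hvK', ?_⟩
  apply Set.eq_of_subset_of_subset
  · have : (Γ.componentComplMk hvK').hom hLK' = Γ.componentComplMk hvL :=
      ComponentCompl.hom_mk _ _
    exact this ▸ (Γ.componentComplMk hvK').subset_hom hLK'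
  · rintro x ⟨hxL, hx⟩
    have hreach : (Γ.induce (Lᶜ : Set V)).Reachable ⟨x, hxL⟩ ⟨v, hvL⟩ :=
      ConnectedComponent.exact hx
    obtain ⟨w⟩ := hreach
    have hsupp : ∀ u ∈ w.support, (u : V) ∈ (K'ᶜ : Set V) := by
      intro u hu
      have : (u : V) ∈ (Γ.componentComplMk hxL).supp := walk_support_subset_supp w u hu
      rw [hx] at this
      exact fun h => hd.ne_of_mem this h rfl
    have := reachable_induce_of_support w hsupp
    exact ⟨fun h => hd.ne_of_mem (hx ▸ Γ.componentComplMk_mem hxL) h rfl,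
      ConnectedComponent.sound (by simpa using this)⟩

open CategoryTheory Opposite in
/-- Every infinite component outside a finite set is the projection of some end. -/
lemma exists_end_of_infinite_supp [LocallyFinite Γ] [Fact Γ.Preconnected]
    (K : Finset V) (C : Γ.ComponentCompl ↑K) (hC : C.supp.Infinite) :
    ∃ e : Γ.end, e.val (op K) = C := by
  classical
  let F : (Finset V)ᵒᵖ ⥤ Type u :=
    { obj := fun L => {D : Γ.ComponentCompl ↑(K ∪ L.unop) //
        D.hom (by exact_mod_cast Finset.subset_union_left) = C}
      map := fun {L L'} f => TypeCat.ofHom fun D =>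
        ⟨D.val.hom (by exact_mod_cast Finset.union_subset_union_right (le_of_op_hom f)), by
          rw [← ComponentCompl.hom_trans]
          exact D.prop⟩
      map_id := fun L => by ext D x; exact Iff.of_eq (congrArg (fun E => x ∈ E.supp) (D.val.hom_refl))
      map_comp := fun {L L' L''} f g => by
        ext D x
        exact Iff.of_eq (congrArg (fun E => x ∈ E.supp) (D.val.hom_trans
            (by exact_mod_cast Finset.union_subset_union_right (le_of_op_hom f))
            (by exact_mod_cast Finset.union_subset_union_right (le_of_op_hom g)))) }
  have hFin : ∀ L, Finite (F.obj L) := fun L => Subtype.finite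
  have hNe : ∀ L, Nonempty (F.obj L) := by
    intro L
    obtain ⟨v, hvC, hvKL⟩ := (hC.diff (K ∪ L.unop).finite_toSet).nonempty
    obtain ⟨hvK, hmk⟩ := hvC
    refine ⟨Γ.componentComplMk (by exact_mod_cast hvKL), ?_⟩
    rw [ComponentCompl.hom_mk]
    exact hmk
  obtain ⟨s, hs⟩ := nonempty_sections_of_finite_inverse_system F
  refine ⟨⟨fun L => (s L).val.hom (by exact_mod_cast Finset.subset_union_right), ?_⟩, ?_⟩
  · intro L L' f
    have hnat := hs f
    have h1 : (s L').val = (s L).val.hom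
        (by exact_mod_cast Finset.union_subset_union_right (le_of_op_hom f)) := by
      rw [← hnat]; rfl
    show (((s L).val.hom (by exact_mod_cast Finset.subset_union_right)).hom
        (by exact_mod_cast (le_of_op_hom f : L'.unop ≤ L.unop)))
      = (s L').val.hom (by exact_mod_cast Finset.subset_union_right)
    rw [h1, ← ComponentCompl.hom_trans, ← ComponentCompl.hom_trans]
  · show (s (op K)).val.hom (by exact_mod_cast Finset.subset_union_right) = C
    exact (s (op K)).prop

open CategoryTheory Opposite in
/-- Universe-polymorphic copy of `SimpleGraph.end_componentCompl_infinite`. -/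
lemma end_supp_infinite (e : Γ.end) (K : (Finset V)ᵒᵖ) :
    ((e.val K : Γ.ComponentCompl K.unop)).supp.Infinite := by
  refine (e.val K).infinite_iff_in_all_ranges.mpr (fun L h => ?_)
  exact ⟨e.val (op L), (e.prop (opHomOfLE h))⟩

open CategoryTheory Opposite in
lemma card_infinite_componentCompl_le [LocallyFinite Γ] [Fact Γ.Preconnected]
    [Finite Γ.end] (K : Finset V) :
    Nat.card {C : Γ.ComponentCompl ↑K // C.supp.Infinite} ≤ Nat.card Γ.end := by
  apply Nat.card_le_card_of_surjective
    (fun e : Γ.end => (⟨e.val (op K), end_supp_infinite e (op K)⟩ :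
      {C : Γ.ComponentCompl ↑K // C.supp.Infinite}))
  rintro ⟨C, hC⟩
  obtain ⟨e, he⟩ := exists_end_of_infinite_supp K C hC
  exact ⟨e, Subtype.ext he⟩

open CategoryTheory Opposite in
lemma exists_injective_eval [Finite Γ.end] :
    ∃ K0 : Finset V, ∀ K : Finset V, K0 ⊆ K →
      Function.Injective (fun e : Γ.end => e.val (op K)) := by
  classical
  have hFin : Fintype Γ.end := Fintype.ofFinite _
  have key : ∀ e e' : Γ.end, ∃ L : Finset V,
      e ≠ e' → e.val (op L) ≠ e'.val (op L) := by
    intro e e'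
    by_cases hne : e = e'
    · exact ⟨∅, fun h => absurd hne h⟩
    · by_contra h
      push_neg at h
      exact hne (Subtype.ext (funext fun M => by simpa using (h M.unop).2))
  let P : Γ.end × Γ.end → Finset V := fun p => (key p.1 p.2).choose
  refine ⟨Finset.univ.sup P, fun K hK e e' hee => ?_⟩
  by_contra hne
  have hsub : P (e, e') ⊆ K := le_trans (Finset.le_sup (Finset.mem_univ (e, e'))) hK
  have harr : op K ⟶ op (P (e, e')) :=
    opHomOfLE (show (op (P (e, e'))).unop ≤ (op K).unop from hsub)
  have h1 := e.prop harr
  have h2 := e'.prop harr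
  have hee' : e.val (op K) = e'.val (op K) := hee
  have : e.val (op (P (e, e'))) = e'.val (op (P (e, e'))) := by
    rw [← h1, ← h2, hee']
  exact (key e e').choose_spec hne this

/-! ### Cayley graph preliminaries -/

section Cayley

open scoped Pointwise

variable {G : Type u} [Group G] {S : Set G}

lemma cayley_adj_smul (g : G) {x y : G} :
    (cayleyGraph S).Adj (g * x) (g * y) ↔ (cayleyGraph S).Adj x y := by
  show ((g * x ≠ g * y) ∧ _) ↔ _
  rw [show (g * x)⁻¹ * (g * y) = x⁻¹ * y by group]
  simp [cayleyGraph, mul_right_inj]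

/-- Left multiplication as an automorphism of the Cayley graph. -/
def cayleyMulIso (g : G) : (cayleyGraph S) ≃g (cayleyGraph S) where
  toEquiv := Equiv.mulLeft g
  map_rel_iff' := cayley_adj_smul g

lemma cayley_preconnected (hSgen : Subgroup.closure S = ⊤) :
    (cayleyGraph S).Preconnected := by
  have key : ∀ v : G, (cayleyGraph S).Reachable 1 v := by
    intro v
    have hv : v ∈ Subgroup.closure S := hSgen ▸ Subgroup.mem_top v
    induction hv using Subgroup.closure_induction with
    | mem s hs =>
      by_cases h1 : (1 : G) = s
      · exact h1 ▸ Reachable.refl _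
      · exact (Adj.reachable ⟨h1, by simpa using Or.inl hs⟩)
    | one => exact Reachable.refl _
    | mul a b _ _ ha hb =>
      refine ha.trans ?_
      have := (Iso.reachable_iff (φ := (cayleyMulIso a : (cayleyGraph S) ≃g _))
        (u := 1) (v := b)).mpr hb
      simpa [cayleyMulIso, Equiv.mulLeft] using this
    | inv a _ ha =>
      have := (Iso.reachable_iff (φ := (cayleyMulIso a⁻¹ : (cayleyGraph S) ≃g _))
        (u := 1) (v := a)).mpr ha
      simp only [cayleyMulIso, Equiv.mulLeft] at this
      simpa using this.symm
  exact fun u v => (key u).symm.trans (key v)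

lemma cayley_locallyFinite (hSfin : S.Finite) (v : G) :
    ((cayleyGraph S).neighborSet v).Finite := by
  apply Set.Finite.subset (((hSfin.union hSfin.inv).image (fun x => v * x)))
  rintro w ⟨hne, hmem⟩
  exact ⟨v⁻¹ * w, hmem, by group⟩

end Cayley

section Ball

open scoped Pointwise

variable {G : Type u} [Group G]

/-- The "ball" of radius `n`: all products of `n` elements of `S ∪ S⁻¹ ∪ {1}`. -/
def cayleyBall (S : Set G) (n : ℕ) : Set G := (insert (1 : G) (S ∪ S⁻¹)) ^ n

variable {S : Set G}

lemma one_mem_genSet : (1 : G) ∈ insert (1 : G) (S ∪ S⁻¹) := Set.mem_insert _ _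

lemma genSet_inv : (insert (1 : G) (S ∪ S⁻¹))⁻¹ = insert (1 : G) (S ∪ S⁻¹) := by
  ext x
  simp only [Set.mem_inv, Set.mem_insert_iff, Set.mem_union, inv_eq_one, inv_inv]
  tauto
lemma cayleyBall_finite (hSfin : S.Finite) (n : ℕ) : (cayleyBall S n).Finite := by
  have hT : (insert (1 : G) (S ∪ S⁻¹)).Finite := ((hSfin.union hSfin.inv).insert 1)
  induction n with
  | zero => simpa [cayleyBall] using Set.finite_singleton (1 : G)
  | succ n ih => rw [cayleyBall, pow_succ]; exact ih.mul hT

lemma one_mem_cayleyBall (n : ℕ) : (1 : G) ∈ cayleyBall S n :=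
  Set.one_mem_pow one_mem_genSet

lemma cayleyBall_mono {m n : ℕ} (h : m ≤ n) : cayleyBall S m ⊆ cayleyBall S n :=
  Set.pow_subset_pow_right one_mem_genSet h

lemma cayleyBall_mul (m n : ℕ) :
    cayleyBall S m * cayleyBall S n = cayleyBall S (m + n) := (pow_add _ m n).symm

lemma cayleyBall_succ (n : ℕ) :
    cayleyBall S (n + 1) = cayleyBall S n * insert (1 : G) (S ∪ S⁻¹) := pow_succ _ _

lemma cayleyBall_inv (n : ℕ) : (cayleyBall S n)⁻¹ = cayleyBall S n := by
  show ((insert (1 : G) (S ∪ S⁻¹)) ^ n)⁻¹ = _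
  rw [← inv_pow, genSet_inv]
  rfl

lemma cayleyBall_exhaust (hSgen : Subgroup.closure S = ⊤) (g : G) :
    ∃ n, g ∈ cayleyBall S n := by
  let U : Subgroup G :=
    { carrier := ⋃ n, cayleyBall S n
      one_mem' := Set.mem_iUnion.mpr ⟨0, one_mem_cayleyBall 0⟩
      mul_mem' := by
        rintro a b ha hb
        obtain ⟨m, hm⟩ := Set.mem_iUnion.mp ha
        obtain ⟨n, hn⟩ := Set.mem_iUnion.mp hb
        refine Set.mem_iUnion.mpr ⟨m + n, ?_⟩
        rw [← cayleyBall_mul m n]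
        exact Set.mul_mem_mul hm hn
      inv_mem' := by
        rintro a ha
        obtain ⟨n, hn⟩ := Set.mem_iUnion.mp ha
        refine Set.mem_iUnion.mpr ⟨n, ?_⟩
        rw [← cayleyBall_inv n]
        exact Set.inv_mem_inv.mpr hn }
  have : g ∈ U := by
    have hle : Subgroup.closure S ≤ U := by
      apply (Subgroup.closure_le _).mpr
      intro s hs
      refine Set.mem_iUnion.mpr ⟨1, ?_⟩
      show s ∈ (insert (1 : G) (S ∪ S⁻¹)) ^ 1
      rw [pow_one]
      exact Set.mem_insert_of_mem _ (Or.inl hs)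
    exact hle (hSgen ▸ Subgroup.mem_top g)
  exact Set.mem_iUnion.mp this

/-- Walking inside a translated ball. -/
lemma cayleyBall_reachable {n : ℕ} (g : G) {b : G} (hb : b ∈ cayleyBall S n)
    (W : Set G) (hW : ∀ c ∈ cayleyBall S n, g * c ∈ W) :
    ((cayleyGraph S).induce W).Reachable
      ⟨g, by simpa using hW 1 (one_mem_cayleyBall n)⟩ ⟨g * b, hW b hb⟩ := by
  induction n generalizing b with
  | zero =>
    have hb1 : b = 1 := by simpa [cayleyBall] using hb
    subst hb1
    have : (⟨g * 1, hW 1 hb⟩ : {x // x ∈ W}) = ⟨g, by simpa using hW 1 hb⟩ :=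
      Subtype.ext (mul_one g)
    rw [this]
  | succ n ih =>
    rw [cayleyBall_succ] at hb
    obtain ⟨c, hc, t, ht, rfl⟩ := hb
    have hW' : ∀ d ∈ cayleyBall S n, g * d ∈ W := fun d hd =>
      hW d (cayleyBall_mono (Nat.le_succ n) hd)
    have h1 := ih hc hW'
    by_cases heq : g * c = g * (c * t)
    · have : (⟨g * c, hW' c hc⟩ : {x // x ∈ W}) = ⟨g * (c * t), hW _ ⟨c, hc, t, ht, rfl⟩⟩ :=
        Subtype.ext heq
      exact this ▸ h1
    · refine h1.trans (Adj.reachable ?_)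
      have hadj : (cayleyGraph S).Adj (g * c) (g * (c * t)) := by
        refine ⟨heq, ?_⟩
        rw [show (g * c)⁻¹ * (g * (c * t)) = t by group]
        rcases Set.mem_insert_iff.mp ht with h1' | h1'
        · exact absurd (by rw [h1', mul_one]) heq
        · exact h1'
      show ((cayleyGraph S).induce W).Adj ⟨g * c, _⟩ ⟨g * (c * t), _⟩
      simpa using hadj

end Ball

section TransEquiv

variable {G : Type u} [Group G] {S : Set G}

lemma componentComplMk_congr {Γ' : SimpleGraph G} {K : Set G} {v w : G} (h : v = w)
    (hv : v ∉ K) (hw : w ∉ K) : Γ'.componentComplMk hv = Γ'.componentComplMk hw := by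
  subst h; rfl

/-- Left translation as an isomorphism of induced subgraphs of the Cayley graph. -/
def cayleyIndIso (g : G) (K : Set G) :
    (cayleyGraph S).induce (Kᶜ : Set G) ≃g
      (cayleyGraph S).induce (((g * ·) '' K)ᶜ : Set G) where
  toEquiv := (Equiv.mulLeft g).subtypeEquiv (fun x => by
    simp only [Set.mem_compl_iff, Set.mem_image, Equiv.coe_mulLeft, not_iff_not]
    constructor
    · intro hx; exact ⟨x, hx, rfl⟩
    · rintro ⟨y, hy, hxy⟩
      obtain rfl : y = x := mul_left_cancel hxy
      exact hy)
  map_rel_iff' := by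
    rintro ⟨a, ha⟩ ⟨b, hb⟩
    simp only [Equiv.subtypeEquiv_apply, comap_adj, Function.Embedding.coe_subtype,
      Equiv.coe_mulLeft]
    exact cayley_adj_smul g

/-- Left translation as an equivalence on components of complements in the Cayley graph. -/
def cayleyCompEquiv (g : G) (K : Set G) :
    (cayleyGraph S).ComponentCompl K ≃ (cayleyGraph S).ComponentCompl ((g * ·) '' K) :=
  (cayleyIndIso g K).connectedComponentEquiv

lemma cayleyCompEquiv_mk (g : G) {K : Set G} {v : G} (hv : v ∉ K)
    (hgv : g * v ∉ (g * ·) '' K) :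
    cayleyCompEquiv g K ((cayleyGraph S).componentComplMk hv)
      = (cayleyGraph S).componentComplMk hgv := rfl

lemma mem_cayleyCompEquiv_supp (g : G) {K : Set G} (C : (cayleyGraph S).ComponentCompl K)
    {x : G} : x ∈ (cayleyCompEquiv g K C).supp ↔ g⁻¹ * x ∈ C.supp := by
  induction C using SimpleGraph.ComponentCompl.ind with
  | _ hv =>
    rename_i v
    have himg : ∀ y : G, y ∉ K → g * y ∉ (g * ·) '' K := by
      rintro y hy ⟨z, hz, hzy⟩
      obtain rfl : z = y := mul_left_cancel hzy
      exact hy hz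
    rw [cayleyCompEquiv_mk g hv (himg v hv)]
    constructor
    · rintro ⟨hx, hmk⟩
      have hx' : g⁻¹ * x ∉ K := fun h => hx ⟨g⁻¹ * x, h, by group⟩
      refine ⟨hx', ?_⟩
      have h2 : cayleyCompEquiv g K ((cayleyGraph S).componentComplMk hx')
          = (cayleyGraph S).componentComplMk hx := by
        rw [cayleyCompEquiv_mk g hx' (himg _ hx')]
        exact componentComplMk_congr (by group) _ _
      apply (cayleyCompEquiv g K).injective
      rw [h2, hmk, cayleyCompEquiv_mk g hv (himg v hv)]
    · rintro ⟨hx, hmk⟩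
      have hgx : g * (g⁻¹ * x) ∉ (g * ·) '' K := himg _ hx
      have hx2 : x ∉ (g * ·) '' K := by
        intro h; exact hgx (by simpa [show g * (g⁻¹ * x) = x by group] using h)
      refine ⟨hx2, ?_⟩
      calc (cayleyGraph S).componentComplMk hx2
          = (cayleyGraph S).componentComplMk hgx := componentComplMk_congr (by group) _ _
        _ = cayleyCompEquiv g K ((cayleyGraph S).componentComplMk hx) :=
            (cayleyCompEquiv_mk g hx hgx).symm
        _ = _ := by rw [hmk]; exact cayleyCompEquiv_mk g hv (himg v hv)

lemma cayleyCompEquiv_supp (g : G) {K : Set G} (C : (cayleyGraph S).ComponentCompl K) :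
    (cayleyCompEquiv g K C).supp = (g * ·) '' C.supp := by
  ext x
  rw [mem_cayleyCompEquiv_supp]
  constructor
  · intro h; exact ⟨g⁻¹ * x, h, by group⟩
  · rintro ⟨y, hy, rfl⟩
    simpa [show g⁻¹ * (g * y) = y by group] using hy

lemma cayleyCompEquiv_infinite (g : G) {K : Set G} (C : (cayleyGraph S).ComponentCompl K) :
    (cayleyCompEquiv g K C).supp.Infinite ↔ C.supp.Infinite := by
  rw [cayleyCompEquiv_supp]
  exact Set.infinite_image_iff (Set.injOn_of_injective (mul_right_injective g))

end TransEquiv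

section CardHelpers

lemma card_le_card_remove {α : Type*} [Finite α] (p : α → Prop) (a : α) :
    Nat.card {x // p x} ≤ Nat.card {x : α // p x ∧ x ≠ a} + 1 := by
  classical
  have hinj : Function.Injective (fun x : {x // p x} =>
      if h : x.val = a then (Sum.inr () : {x : α // p x ∧ x ≠ a} ⊕ Unit)
      else Sum.inl ⟨x.val, x.prop, h⟩) := by
    rintro ⟨x, hx⟩ ⟨y, hy⟩ hxy
    simp only at hxy
    by_cases h1 : x = a <;> by_cases h2 : y = a
    · simp [h1, h2]
    · rw [dif_pos h1, dif_neg h2] at hxy; exact absurd hxy (by simp)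
    · rw [dif_neg h1, dif_pos h2] at hxy; exact absurd hxy (by simp)
    · rw [dif_neg h1, dif_neg h2] at hxy
      simp only [Sum.inl.injEq, Subtype.mk.injEq] at hxy
      simp [hxy]
  have := Nat.card_le_card_of_injective _ hinj
  simpa [Nat.card_sum] using this

lemma card_add_card_le {α β γ : Type*} [Finite γ] (f : α → γ) (g : β → γ)
    (hf : Function.Injective f) (hg : Function.Injective g)
    (hd : ∀ a b, f a ≠ g b) : Nat.card α + Nat.card β ≤ Nat.card γ := by
  have : Finite α := Finite.of_injective f hf
  have : Finite β := Finite.of_injective g hg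
  have hinj : Function.Injective (Sum.elim f g) := hf.sumElim hg hd
  have := Nat.card_le_card_of_injective _ hinj
  simpa [Nat.card_sum] using this

end CardHelpers

variable {V : Type u} {Γ : SimpleGraph V}

lemma componentCompl_finite_of_finite [LocallyFinite Γ] [Fact Γ.Preconnected]
    {K : Set V} (hK : K.Finite) : Finite (Γ.ComponentCompl K) := by
  have h : (hK.toFinset : Set V) = K := hK.coe_toFinset
  have : Finite (Γ.ComponentCompl ↑hK.toFinset) := inferInstance
  rwa [h] at this

lemma card_infinite_componentCompl_le' [LocallyFinite Γ] [Fact Γ.Preconnected]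
    [Finite Γ.end] {K : Set V} (hK : K.Finite) :
    Nat.card {C : Γ.ComponentCompl K // C.supp.Infinite} ≤ Nat.card Γ.end := by
  have h : (hK.toFinset : Set V) = K := hK.coe_toFinset
  rw [← h]
  exact card_infinite_componentCompl_le hK.toFinset

section Pump

open scoped Pointwise

variable {G : Type u} [Group G] {S : Set G}

lemma pump [LocallyFinite (cayleyGraph S)] [Fact (cayleyGraph S).Preconnected]
    (hSfin : S.Finite) (r m : ℕ) (hm : 3 ≤ m)
    (hcard : m ≤ Nat.card
      {C : (cayleyGraph S).ComponentCompl (cayleyBall S r) // C.supp.Infinite}) :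
    ∃ K' : Set G, K'.Finite ∧ m + 1 ≤ Nat.card
      {C : (cayleyGraph S).ComponentCompl K' // C.supp.Infinite} := by
  classical
  set Γ := cayleyGraph S with hΓ
  set K : Set G := cayleyBall S r with hK
  have hKfin : K.Finite := cayleyBall_finite hSfin r
  have hKne : K.Nonempty := ⟨1, one_mem_cayleyBall r⟩
  have : Finite (Γ.ComponentCompl K) := componentCompl_finite_of_finite hKfin
  -- pick an infinite component C1
  have hne : Nonempty {C : Γ.ComponentCompl K // C.supp.Infinite} := by
    rcases isEmpty_or_nonempty {C : Γ.ComponentCompl K // C.supp.Infinite} with h | h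
    · rw [Nat.card_of_isEmpty] at hcard; omega
    · exact h
  obtain ⟨⟨C1, hC1inf⟩⟩ := hne
  -- pick g in C1 far away
  obtain ⟨g, hgC1, hg2r⟩ := (hC1inf.diff (cayleyBall_finite hSfin (2 * r))).nonempty
  -- the translate g • K avoids K
  have hdisj : ∀ b ∈ K, g * b ∉ K := by
    intro b hb hgb
    apply hg2r
    have : g = (g * b) * b⁻¹ := by group
    rw [this, show 2 * r = r + r by ring, ← cayleyBall_mul]
    exact Set.mul_mem_mul hgb (by rw [← cayleyBall_inv]; exact Set.inv_mem_inv.mpr hb)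
  obtain ⟨hgK, hgmk⟩ := hgC1
  -- the whole translated ball lies in C1
  have hgball : ∀ b ∈ K, g * b ∈ C1.supp := by
    intro b hb
    have hreach := cayleyBall_reachable (S := S) g hb Kᶜ (fun c hc => hdisj c hc)
    refine ⟨hdisj b hb, ?_⟩
    rw [← hgmk]
    exact ConnectedComponent.sound (by simpa using hreach.symm)
  set gK : Set G := (g * ·) '' K with hgKdef
  have hgKsub : gK ⊆ C1.supp := by rintro x ⟨b, hb, rfl⟩; exact hgball b hb
  have hgKne : gK.Nonempty := ⟨g, 1, one_mem_cayleyBall r, mul_one g⟩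
  have hgKfin : gK.Finite := hKfin.image _
  have hKgKdisj : ∀ k ∈ K, k ∉ gK := by
    rintro k hk ⟨b, hb, rfl⟩
    exact (hdisj b hb) hk
  -- the component E0 of gKᶜ containing 1 (and all of K)
  have h1gK : (1 : G) ∉ gK := hKgKdisj 1 (one_mem_cayleyBall r)
  set E0 : Γ.ComponentCompl gK := Γ.componentComplMk h1gK with hE0
  have hKE0 : ∀ k ∈ K, k ∈ E0.supp := by
    intro k hk
    have hW : ∀ c ∈ K, (1 : G) * c ∈ gKᶜ := fun c hc => by
      simpa using hKgKdisj c hc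
    have hreach := cayleyBall_reachable (S := S) 1 hk (gKᶜ) hW
    refine ⟨hKgKdisj k hk, ?_⟩
    have h1 : Γ.componentComplMk (hKgKdisj k hk)
        = Γ.componentComplMk (show (1:G) * k ∉ gK from by
            simpa using hKgKdisj k hk) :=
      componentComplMk_congr (one_mul k).symm _ _
    rw [hE0, h1]
    exact ConnectedComponent.sound (by simpa using hreach.symm)
  -- components of gKᶜ other than E0 avoid K and live inside C1
  have hEK : ∀ E : Γ.ComponentCompl gK, E ≠ E0 → Disjoint E.supp K := by
    intro E hE
    rw [Set.disjoint_right]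
    intro k hk hkE
    exact hE (SimpleGraph.ComponentCompl.pairwise_disjoint.eq
      (Set.not_disjoint_iff.mpr ⟨k, hkE, hKE0 k hk⟩))
  have hEC1 : ∀ E : Γ.ComponentCompl gK, E ≠ E0 → E.supp ⊆ C1.supp := by
    intro E hE x hx
    obtain ⟨⟨c, k⟩, hcE, hkgK, hadj⟩ :=
      E.exists_adj_boundary_pair Fact.out hgKne
    have hkC1 : k ∈ C1.supp := hgKsub hkgK
    have hcK : c ∉ K := fun h => (Set.disjoint_left.mp (hEK E hE) hcE) h
    have hcC1 : c ∈ C1.supp := SimpleGraph.ComponentCompl.mem_of_adj k c hkC1 hcK hadj.symm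
    -- now transfer reachability from x to c
    obtain ⟨hxgK, hxmk⟩ := hx
    obtain ⟨hcgK, hcmk⟩ := hcE
    have hreach : (Γ.induce (gKᶜ : Set G)).Reachable ⟨x, hxgK⟩ ⟨c, hcgK⟩ :=
      ConnectedComponent.exact (hxmk.trans hcmk.symm)
    obtain ⟨w⟩ := hreach
    have hsupp : ∀ u ∈ w.support, (u : G) ∈ (Kᶜ : Set G) := by
      intro u hu
      have : (u : G) ∈ (Γ.componentComplMk hxgK).supp := walk_support_subset_supp w u hu
      rw [hxmk] at this
      exact Set.disjoint_left.mp (hEK E hE) this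
    have hr2 := reachable_induce_of_support w hsupp
    have hxK : x ∉ K := hsupp ⟨x, hxgK⟩ w.start_mem_support
    refine ⟨hxK, ?_⟩
    obtain ⟨hcC1', hcC1mk⟩ := hcC1
    exact (ConnectedComponent.sound (by simpa using hr2)).trans hcC1mk
  -- the new cutting set
  refine ⟨K ∪ gK, hKfin.union hgKfin, ?_⟩
  have hK'fin : (K ∪ gK).Finite := hKfin.union hgKfin
  have : Finite (Γ.ComponentCompl (K ∪ gK)) := componentCompl_finite_of_finite hK'fin
  have : Finite (Γ.ComponentCompl gK) := componentCompl_finite_of_finite hgKfin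
  -- injection from infinite components of K other than C1
  have hresA : ∀ D : {D : Γ.ComponentCompl K // D.supp.Infinite ∧ D ≠ C1},
      ∃ D' : Γ.ComponentCompl (K ∪ gK), D'.supp = D.val.supp := by
    rintro ⟨D, hDinf, hDne⟩
    apply exists_componentCompl_supp_eq Set.subset_union_left
    rw [Set.disjoint_union_right]
    constructor
    · exact (SimpleGraph.ComponentCompl.disjoint_right D).symm
    · refine Set.disjoint_left.mpr fun x hxD hxgK => ?_
      have hxC1 : x ∈ C1.supp := hgKsub hxgK
      exact hDne (SimpleGraph.ComponentCompl.pairwise_disjoint.eq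
        (Set.not_disjoint_iff.mpr ⟨x, hxD, hxC1⟩))
  have hresB : ∀ E : {E : Γ.ComponentCompl gK // E.supp.Infinite ∧ E ≠ E0},
      ∃ E' : Γ.ComponentCompl (K ∪ gK), E'.supp = E.val.supp := by
    rintro ⟨E, hEinf, hEne⟩
    apply exists_componentCompl_supp_eq Set.subset_union_right
    rw [Set.disjoint_union_right]
    exact ⟨hEK E hEne, (SimpleGraph.ComponentCompl.disjoint_right E).symm⟩
  let fA : {D : Γ.ComponentCompl K // D.supp.Infinite ∧ D ≠ C1} →
      {C : Γ.ComponentCompl (K ∪ gK) // C.supp.Infinite} :=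
    fun D => ⟨(hresA D).choose, by rw [(hresA D).choose_spec]; exact D.prop.1⟩
  let fB : {E : Γ.ComponentCompl gK // E.supp.Infinite ∧ E ≠ E0} →
      {C : Γ.ComponentCompl (K ∪ gK) // C.supp.Infinite} :=
    fun E => ⟨(hresB E).choose, by rw [(hresB E).choose_spec]; exact E.prop.1⟩
  have hfAsupp : ∀ D, (fA D).val.supp = D.val.supp := fun D => (hresA D).choose_spec
  have hfBsupp : ∀ E, (fB E).val.supp = E.val.supp := fun E => (hresB E).choose_spec
  have hfAinj : Function.Injective fA := by
    intro D D' h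
    have : D.val.supp = D'.val.supp := by
      rw [← hfAsupp D, ← hfAsupp D', h]
    exact Subtype.ext (SimpleGraph.ComponentCompl.supp_injective this)
  have hfBinj : Function.Injective fB := by
    intro E E' h
    have : E.val.supp = E'.val.supp := by
      rw [← hfBsupp E, ← hfBsupp E', h]
    exact Subtype.ext (SimpleGraph.ComponentCompl.supp_injective this)
  have hdisjim : ∀ D E, fA D ≠ fB E := by
    intro D E h
    have hsupp : D.val.supp = E.val.supp := by
      rw [← hfAsupp D, ← hfBsupp E, h]
    obtain ⟨x, hxE⟩ := E.val.nonempty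
    have hxC1 : x ∈ C1.supp := hEC1 E.val E.prop.2 hxE
    have hxD : x ∈ D.val.supp := hsupp ▸ hxE
    exact D.prop.2 (SimpleGraph.ComponentCompl.pairwise_disjoint.eq
      (Set.not_disjoint_iff.mpr ⟨x, hxD, hxC1⟩))
  have hmain := card_add_card_le fA fB hfAinj hfBinj hdisjim
  -- card bounds on the two source types
  have hA : m ≤ Nat.card {D : Γ.ComponentCompl K // D.supp.Infinite ∧ D ≠ C1} + 1 :=
    le_trans hcard (card_le_card_remove _ C1)
  have hcardgK : Nat.card {C : Γ.ComponentCompl gK // C.supp.Infinite}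
      = Nat.card {C : Γ.ComponentCompl K // C.supp.Infinite} := by
    apply Nat.card_congr
    exact ((Equiv.subtypeEquiv (cayleyCompEquiv g K)
      (fun C => (cayleyCompEquiv_infinite g C).symm)).symm)
  have hB : m ≤ Nat.card {E : Γ.ComponentCompl gK // E.supp.Infinite ∧ E ≠ E0} + 1 := by
    refine le_trans ?_ (card_le_card_remove _ E0)
    rw [hcardgK]
    exact hcard
  omega

end Pump


open CategoryTheory Opposite in
/-- **Freudenthal–Hopf theorem.** The end space of the Cayley graph of a finitely
generated group is empty, a singleton, has exactly two elements, or is infinite. -/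
theorem freudenthal_hopf {G : Type*} [Group G] (S : Set G)
    (hSfin : S.Finite) (hSgen : Subgroup.closure S = ⊤) :
    IsEmpty (cayleyGraph S).end ∨ Nat.card (cayleyGraph S).end = 1 ∨
      Nat.card (cayleyGraph S).end = 2 ∨ Infinite (cayleyGraph S).end := by
  classical
  set Γ := cayleyGraph S with hΓ
  haveI : LocallyFinite Γ := fun v => (cayley_locallyFinite hSfin v).fintype
  haveI : Fact Γ.Preconnected := ⟨cayley_preconnected hSgen⟩
  rcases finite_or_infinite Γ.end with hfin | hinf
  · by_cases h2 : Nat.card Γ.end ≤ 2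
    · have h012 : Nat.card Γ.end = 0 ∨ Nat.card Γ.end = 1 ∨ Nat.card Γ.end = 2 := by omega
      rcases h012 with h | h | h
      · left
        rcases Nat.card_eq_zero.mp h with h' | h'
        · exact h'
        · exact absurd h' (not_infinite_iff_finite.mpr hfin)
      · exact Or.inr (Or.inl h)
      · exact Or.inr (Or.inr (Or.inl h))
    · exfalso
      push_neg at h2
      have h3 : 3 ≤ Nat.card Γ.end := h2
      obtain ⟨K0, hK0⟩ := exists_injective_eval (Γ := Γ)
      have hexr : ∃ r : ℕ, (K0 : Set G) ⊆ cayleyBall S r := by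
        refine ⟨K0.sup (fun x => (cayleyBall_exhaust hSgen x).choose), fun x hx => ?_⟩
        exact cayleyBall_mono (Finset.le_sup hx)
          (cayleyBall_exhaust hSgen x).choose_spec
      obtain ⟨r, hr⟩ := hexr
      set Kb : Finset G := (cayleyBall_finite hSfin r).toFinset with hKb
      have hKbcoe : (Kb : Set G) = cayleyBall S r := Set.Finite.coe_toFinset _
      have hK0Kb : K0 ⊆ Kb := fun x hx => by
        rw [← Finset.mem_coe, hKbcoe]; exact hr hx
      have hinj := hK0 Kb hK0Kb
      have hn : Nat.card Γ.end ≤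
          Nat.card {C : Γ.ComponentCompl ↑Kb // C.supp.Infinite} := by
        apply Nat.card_le_card_of_injective
          (fun e : Γ.end => (⟨e.val (op Kb), end_supp_infinite e (op Kb)⟩ :
            {C : Γ.ComponentCompl ↑Kb // C.supp.Infinite}))
        intro e e' h
        exact hinj (congrArg Subtype.val h)
      rw [hKbcoe] at hn
      obtain ⟨K', hK'fin, hK'card⟩ := pump hSfin r (Nat.card Γ.end) h3 hn
      have hK'card' : Nat.card Γ.end + 1 ≤
          Nat.card {C : Γ.ComponentCompl K' // C.supp.Infinite} := hK'card
      have hle := card_infinite_componentCompl_le' (Γ := Γ) (K := K') hK'fin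
      omega
  · exact Or.inr (Or.inr (Or.inr hinf))
end

section
/- Let G be an infinite group acting freely by automorphisms on a connected, locally finite simple graph Γ whose end space has exactly two elements. Let K be a finite set of vertices of Γ such that the complement of K has exactly two infinite connected components, and let X be the vertex set of one of these two infinite components. Then for every g ∈ G, either the symmetric difference gX Δ X is finite, or its complement in the vertex set of Γ is finite. -/
open CategoryTheory Set

namespace MyAux

variable {V : Type*} {Γ : SimpleGraph V}

/-- Every infinite component outside a finite set is hit by an end. -/
lemma my_exists_end (hconn : Γ.Connected) (hlf : Γ.LocallyFinite) [Infinite V]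
    (L : Finset V) (D : Γ.ComponentCompl (L : Set V)) (hD : D.supp.Infinite) :
    ∃ e : Γ.end, e.val (Opposite.op L) = D := by
  haveI : Fact Γ.Preconnected := ⟨hconn.preconnected⟩
  haveI := hlf
  haveI : ∀ j : (Finset V)ᵒᵖ, Finite (Γ.componentComplFunctor.obj j) :=
    fun j => Γ.componentCompl_finite j.unop
  haveI : ∀ j : (Finset V)ᵒᵖ, Nonempty (Γ.componentComplFunctor.obj j) :=
    fun j => Γ.componentCompl_nonempty_of_infinite j.unop
  set F := Γ.componentComplFunctor with hF
  have hML : F.IsMittagLeffler :=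
    F.isMittagLeffler_of_exists_finite_range fun j => ⟨j, 𝟙 j, Set.finite_range _⟩
  haveI : ∀ j, Nonempty (F.toEventualRanges.obj j) := fun j => F.toEventualRanges_nonempty hML j
  haveI : ∀ j, Finite (F.toEventualRanges.obj j) := F.toEventualRanges_finite
  have hDev : D ∈ F.eventualRange (Opposite.op L) :=
    (Γ.infinite_iff_in_eventualRange D).mp hD
  obtain ⟨s, hs⟩ := F.toEventualRanges.eval_section_surjective_of_surjective
    (F.surjective_toEventualRanges hML) (Opposite.op L) ⟨D, hDev⟩
  exact ⟨F.toEventualRangesSectionsEquiv s, congrArg Subtype.val hs⟩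

lemma my_card_le (hconn : Γ.Connected) (hlf : Γ.LocallyFinite) [Infinite V] [Finite Γ.end]
    (L : Finset V) :
    Nat.card {D : Γ.ComponentCompl (L : Set V) // D.supp.Infinite} ≤ Nat.card Γ.end := by
  choose f hf using fun D : {D : Γ.ComponentCompl (L : Set V) // D.supp.Infinite} =>
    my_exists_end hconn hlf L D.1 D.2
  exact Nat.card_le_card_of_injective f fun D D' h =>
    Subtype.ext (by rw [← hf D, ← hf D', h])

/-- A set which is "edge-constant" away from `L` is saturated for components outside `L`. -/
lemma my_sat {L S : Set V}
    (h : ∀ ⦃x y : V⦄, x ∉ L → y ∉ L → Γ.Adj x y → (x ∈ S ↔ y ∈ S)) :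
    ∀ D : Γ.ComponentCompl L, D.supp ⊆ S ∨ Disjoint D.supp S := by
  have key : ∀ (a b : ↥(Lᶜ)) (p : (Γ.induce Lᶜ).Walk a b), ((a : V) ∈ S ↔ (b : V) ∈ S) := by
    intro a b p
    induction p with
    | nil => exact Iff.rfl
    | @cons u v w huv _ ih => exact (h u.2 v.2 huv).trans ih
  intro D
  obtain ⟨v, hv, rfl⟩ := D.exists_eq_mk
  have memiff : ∀ w, w ∈ (Γ.componentComplMk hv).supp → (w ∈ S ↔ v ∈ S) := by
    rintro w ⟨hw, hww⟩
    have hr : (Γ.induce Lᶜ).Reachable ⟨w, hw⟩ ⟨v, hv⟩ :=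
      (SimpleGraph.ConnectedComponent.eq).mp hww
    exact hr.elim fun p => key _ _ p
  by_cases hvS : v ∈ S
  · exact Or.inl fun w hw => (memiff w hw).mpr hvS
  · refine Or.inr (Set.disjoint_left.mpr fun w hw hwS => hvS ((memiff w hw).mp hwS))

lemma my_two {α : Type*} [Finite α] (hcard : Nat.card α ≤ 2) {x y : α} (hxy : x ≠ y) (z : α) :
    z = x ∨ z = y := by
  by_contra hz
  push_neg at hz
  classical
  cases nonempty_fintype α
  have h3 : ({x, y, z} : Finset α).card = 3 :=
    Finset.card_eq_three.mpr ⟨x, y, z, hxy, fun h => hz.1 h.symm, fun h => hz.2 h.symm, rfl⟩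
  have := Finset.card_le_univ ({x, y, z} : Finset α)
  rw [h3] at this
  rw [Nat.card_eq_fintype_card] at hcard
  omega

end MyAux

open MyAux

/-- Let an infinite group `G` act freely by automorphisms on a connected locally finite
graph `Γ` with exactly two ends. If `K` is a finite set of vertices whose complement has
exactly two infinite connected components and `X` is the vertex set of one of them, then
for every `g ∈ G` either the symmetric difference `gX Δ X` or its complement is finite. -/
theorem almost_invariant_of_two_ended {V G : Type*} [Group G] [Infinite G]
    (Γ : SimpleGraph V) (hconn : Γ.Connected) (hlf : Γ.LocallyFinite)
    (act : G →* Equiv.Perm V)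
    (hadj : ∀ (g : G) (u v : V), Γ.Adj u v → Γ.Adj (act g u) (act g v))
    (hfree : ∀ g : G, g ≠ 1 → ∀ v : V, act g v ≠ v)
    (hends : Nat.card Γ.end = 2)
    (K : Set V) (hK : K.Finite)
    (htwo : Nat.card {C : Γ.ComponentCompl K // C.supp.Infinite} = 2)
    (C : Γ.ComponentCompl K) (hC : C.supp.Infinite)
    (X : Set V) (hX : X = C.supp) :
    ∀ g : G, (symmDiff (⇑(act g) '' X) X).Finite ∨ (symmDiff (⇑(act g) '' X) X)ᶜ.Finite := by
  intro g
  haveI : Infinite V := by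
    haveI := hC.to_subtype
    exact Infinite.of_injective (Subtype.val : C.supp → V) Subtype.val_injective
  haveI : Finite Γ.end := Nat.finite_of_card_ne_zero (by rw [hends]; omega)
  haveI : Fact Γ.Preconnected := ⟨hconn.preconnected⟩
  haveI := hlf
  classical
  set φ : V → V := ⇑(act g) with hφ
  -- basic facts about the action
  have hinv1 : ∀ x : V, act g⁻¹ (φ x) = x := fun x => by
    rw [hφ, ← Equiv.Perm.mul_apply, ← map_mul, inv_mul_cancel, map_one, Equiv.Perm.one_apply]
  have hinv2 : ∀ x : V, φ (act g⁻¹ x) = x := fun x => by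
    rw [hφ, ← Equiv.Perm.mul_apply, ← map_mul, mul_inv_cancel, map_one, Equiv.Perm.one_apply]
  have hmem : ∀ x : V, x ∈ φ '' X ↔ (act g⁻¹) x ∈ X := by
    intro x
    constructor
    · rintro ⟨a, ha, rfl⟩
      rwa [hinv1 a]
    · intro h
      exact ⟨_, h, hinv2 x⟩
  -- the enlarged finite set L
  set L : Finset V := hK.toFinset ∪ (hK.image φ).toFinset with hL
  have hKL : K ⊆ (L : Set V) := by
    intro v hv
    simp [hL, hv]
  have hgKL : φ '' K ⊆ (L : Set V) := by
    intro v hv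
    simp only [hL, Finset.coe_union, Set.Finite.coe_toFinset, Set.mem_union]
    exact Or.inr hv
  -- saturation of X and of φ '' X with respect to components outside L
  have hsatX : ∀ D : Γ.ComponentCompl (L : Set V), D.supp ⊆ X ∨ Disjoint D.supp X := by
    apply my_sat
    intro x y hx hy hxy
    rw [hX]
    have hxK : x ∉ K := fun h => hx (hKL h)
    have hyK : y ∉ K := fun h => hy (hKL h)
    exact ⟨fun h => SimpleGraph.ComponentCompl.mem_of_adj x y h hyK hxy,
      fun h => SimpleGraph.ComponentCompl.mem_of_adj y x h hxK hxy.symm⟩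
  have hsatgX : ∀ D : Γ.ComponentCompl (L : Set V), D.supp ⊆ φ '' X ∨ Disjoint D.supp (φ '' X) := by
    apply my_sat
    intro x y hx hy hxy
    rw [hmem x, hmem y, hX]
    have hxK : (act g⁻¹) x ∉ K := fun h => hx (hgKL ⟨_, h, hinv2 x⟩)
    have hyK : (act g⁻¹) y ∉ K := fun h => hy (hgKL ⟨_, h, hinv2 y⟩)
    have hadj' : Γ.Adj ((act g⁻¹) x) ((act g⁻¹) y) := hadj g⁻¹ x y hxy
    exact ⟨fun h => SimpleGraph.ComponentCompl.mem_of_adj _ _ h hyK hadj',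
      fun h => SimpleGraph.ComponentCompl.mem_of_adj _ _ h hxK hadj'.symm⟩
  -- the finite "junk" set B
  haveI : Finite (Γ.ComponentCompl (L : Set V)) := Γ.componentCompl_finite L
  have hU : (⋃ D : {D : Γ.ComponentCompl (L : Set V) // D.supp.Finite}, D.1.supp).Finite :=
    Set.finite_iUnion fun D => D.2
  set B : Set V := (L : Set V) ∪ ⋃ D : {D : Γ.ComponentCompl (L : Set V) // D.supp.Finite},
    D.1.supp with hB
  have hBfin : B.Finite := (L.finite_toSet).union hU
  -- off B, every vertex lies in an infinite component outside L
  have hcompOf : ∀ v : V, v ∉ B → ∃ D : Γ.ComponentCompl (L : Set V),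
      D.supp.Infinite ∧ v ∈ D.supp := by
    intro v hvB
    have hvL : v ∉ (L : Set V) := fun h => hvB (Or.inl h)
    refine ⟨Γ.componentComplMk hvL, ?_, Γ.componentComplMk_mem hvL⟩
    by_contra hfin
    exact hvB (Or.inr (Set.mem_iUnion.mpr
      ⟨⟨_, Set.not_infinite.mp hfin⟩, Γ.componentComplMk_mem hvL⟩))
  have hexists : ∀ S : Set V, S.Infinite →
      (∀ D : Γ.ComponentCompl (L : Set V), D.supp ⊆ S ∨ Disjoint D.supp S) →
      ∃ D : Γ.ComponentCompl (L : Set V), D.supp.Infinite ∧ D.supp ⊆ S := by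
    intro S hS hsat
    obtain ⟨v, hvS, hvB⟩ := (hS.diff hBfin).nonempty
    obtain ⟨D, hDinf, hvD⟩ := hcompOf v hvB
    rcases hsat D with h | h
    · exact ⟨D, hDinf, h⟩
    · exact absurd hvS (Set.disjoint_left.mp h hvD)
  -- the other infinite component of Kᶜ
  obtain ⟨x₀, y₀, hxy₀, huniv₀⟩ := Nat.card_eq_two_iff.mp htwo
  have hother : ∃ D₀ : Γ.ComponentCompl K, D₀.supp.Infinite ∧ D₀ ≠ C := by
    by_cases hx : x₀.1 = C
    · refine ⟨y₀.1, y₀.2, fun h => hxy₀ (Subtype.ext (hx.trans h.symm))⟩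
    · exact ⟨x₀.1, x₀.2, hx⟩
  obtain ⟨D₀, hD₀inf, hD₀ne⟩ := hother
  have hD₀disj : Disjoint D₀.supp C.supp := by
    have := SimpleGraph.ComponentCompl.pairwise_disjoint (G := Γ) (K := K) hD₀ne
    exact this
  -- infinite subsets of Xᶜ and (φ '' X)ᶜ
  have hXinf : X.Infinite := hX ▸ hC
  have hXcinf : Xᶜ.Infinite := by
    apply hD₀inf.mono
    rw [hX, Set.subset_compl_iff_disjoint_right]
    exact hD₀disj
  have hgXinf : (φ '' X).Infinite := hXinf.image ((act g).injective.injOn)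
  have hgXcinf : (φ '' X)ᶜ.Infinite := by
    apply (hD₀inf.image ((act g).injective.injOn)).mono
    rw [Set.subset_compl_iff_disjoint_right, hX, hφ]
    exact Set.disjoint_image_of_injective (act g).injective hD₀disj
  have hsatXc : ∀ D : Γ.ComponentCompl (L : Set V), D.supp ⊆ Xᶜ ∨ Disjoint D.supp Xᶜ := by
    intro D
    rcases hsatX D with h | h
    · exact Or.inr (Set.disjoint_compl_right_iff_subset.mpr h)
    · exact Or.inl (Set.subset_compl_iff_disjoint_right.mpr h)
  have hsatgXc : ∀ D : Γ.ComponentCompl (L : Set V),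
      D.supp ⊆ (φ '' X)ᶜ ∨ Disjoint D.supp (φ '' X)ᶜ := by
    intro D
    rcases hsatgX D with h | h
    · exact Or.inr (Set.disjoint_compl_right_iff_subset.mpr h)
    · exact Or.inl (Set.subset_compl_iff_disjoint_right.mpr h)
  obtain ⟨E1, hE1inf, hE1⟩ := hexists X hXinf hsatX
  obtain ⟨E2, hE2inf, hE2⟩ := hexists Xᶜ hXcinf hsatXc
  obtain ⟨E3, hE3inf, hE3⟩ := hexists (φ '' X) hgXinf hsatgX
  obtain ⟨E4, hE4inf, hE4⟩ := hexists (φ '' X)ᶜ hgXcinf hsatgXc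
  have hcard : Nat.card {D : Γ.ComponentCompl (L : Set V) // D.supp.Infinite} ≤ 2 := by
    rw [← hends]
    exact my_card_le hconn hlf L
  have hdisj12 : E1 ≠ E2 := by
    intro h
    obtain ⟨v, hv⟩ := E1.nonempty
    exact hE2 (h ▸ hv) (hE1 hv)
  have hdisj34 : E3 ≠ E4 := by
    intro h
    obtain ⟨v, hv⟩ := E3.nonempty
    exact hE4 (h ▸ hv) (hE3 hv)
  have hne12 : (⟨E1, hE1inf⟩ : {D : Γ.ComponentCompl (L : Set V) // D.supp.Infinite}) ≠
      ⟨E2, hE2inf⟩ := fun h => hdisj12 (congrArg Subtype.val h)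
  have hdich : ∀ (E : Γ.ComponentCompl (L : Set V)) (hE : E.supp.Infinite), E = E1 ∨ E = E2 := by
    intro E hE
    rcases my_two hcard hne12 ⟨E, hE⟩ with h | h
    · exact Or.inl (congrArg Subtype.val h)
    · exact Or.inr (congrArg Subtype.val h)
  -- classify E3 and E4
  rcases hdich E3 hE3inf with h3 | h3
  · -- E3 = E1 : gX and X share the infinite component E1, so E4 = E2 and symmdiff is finite
    have h4 : E4 = E2 := by
      rcases hdich E4 hE4inf with h4 | h4
      · exact absurd (h4.trans h3.symm) hdisj34.symm
      · exact h4
    left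
    apply hBfin.subset
    intro v hv
    by_contra hvB
    obtain ⟨D, hDinf, hvD⟩ := hcompOf v hvB
    rcases hdich D hDinf with rfl | rfl
    · have hvX : v ∈ X := hE1 hvD
      have hvgX : v ∈ φ '' X := hE3 (h3 ▸ hvD)
      rw [Set.mem_symmDiff] at hv
      rcases hv with ⟨_, h⟩ | ⟨_, h⟩ <;> [exact h hvX; exact h hvgX]
    · have hvX : v ∉ X := hE2 hvD
      have hvgX : v ∉ φ '' X := hE4 (h4 ▸ hvD)
      rw [Set.mem_symmDiff] at hv
      rcases hv with ⟨h, _⟩ | ⟨h, _⟩ <;> [exact hvgX h; exact hvX h]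
  · -- E3 = E2 : gX meets X in the opposite component; the complement of symmdiff is finite
    have h4 : E4 = E1 := by
      rcases hdich E4 hE4inf with h4 | h4
      · exact h4
      · exact absurd (h4.trans h3.symm) hdisj34.symm
    right
    apply hBfin.subset
    intro v hv
    by_contra hvB
    obtain ⟨D, hDinf, hvD⟩ := hcompOf v hvB
    rw [Set.mem_compl_iff, Set.mem_symmDiff] at hv
    push_neg at hv
    rcases hdich D hDinf with rfl | rfl
    · have hvX : v ∈ X := hE1 hvD
      have hvgX : v ∉ φ '' X := hE4 (h4 ▸ hvD)
      exact hvgX (hv.2 hvX)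
    · have hvX : v ∉ X := hE2 hvD
      have hvgX : v ∈ φ '' X := hE3 (h3 ▸ hvD)
      exact hvX (hv.1 hvgX)
end

section
/- Let G be an infinite group acting freely by automorphisms on a connected, locally finite simple graph Γ whose end space has exactly two elements. Then there is a finite set L of vertices of Γ such that every vertex of Γ lies in the image of L under some element of G; that is, the action of G on the vertex set of Γ has only finitely many orbits. -/
open SimpleGraph Set

namespace TwoEnds

variable {V : Type*} {Γ : SimpleGraph V}

/-- `A` is closed under adjacency relative to removed set `B`. -/
def AdjClosed (Γ : SimpleGraph V) (A B : Set V) : Prop :=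
  ∀ ⦃x⦄, x ∈ A → ∀ ⦃y⦄, Γ.Adj x y → y ∉ B → y ∈ A

/-- every point of `A` is joined to `a0` by a walk inside `A`. -/
def WConn (Γ : SimpleGraph V) (A : Set V) (a0 : V) : Prop :=
  ∀ x ∈ A, ∃ p : Γ.Walk a0 x, ∀ z ∈ p.support, z ∈ A

/-- any two points of `A` are joined by a walk inside `A`. -/
def IConn (Γ : SimpleGraph V) (A : Set V) : Prop :=
  ∀ x ∈ A, ∀ y ∈ A, ∃ p : Γ.Walk x y, ∀ z ∈ p.support, z ∈ A

theorem propagate {S B : Set V} (hS : AdjClosed Γ S B) {a b : V} (p : Γ.Walk a b)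
    (hp : ∀ z ∈ p.support, z ∉ B) (ha : a ∈ S) : b ∈ S := by
  induction p with
  | nil => exact ha
  | cons h q ih =>
    rename_i u v w
    refine ih (fun z hz => hp z (by simp [hz])) (hS ha h ?_)
    exact hp v (by simp)

theorem wconn_subset {S B A : Set V} {a0 : V} (hS : AdjClosed Γ S B) (hA : WConn Γ A a0)
    (hAB : ∀ x ∈ A, x ∉ B) (ha0 : a0 ∈ S) : A ⊆ S := by
  intro x hx
  obtain ⟨p, hp⟩ := hA x hx
  exact propagate hS p (fun z hz => hAB z (hp z hz)) ha0

theorem iconn_subset {S B A : Set V} (hS : AdjClosed Γ S B) (hA : IConn Γ A)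
    (hAB : ∀ x ∈ A, x ∉ B) {x0 : V} (hx0A : x0 ∈ A) (hx0S : x0 ∈ S) : A ⊆ S := by
  intro x hx
  obtain ⟨p, hp⟩ := hA x0 hx0A x hx
  exact propagate hS p (fun z hz => hAB z (hp z hz)) hx0S

/-- crossing lemma: a walk from outside an adjacency-closed set `S` into `S`
must meet the removed set `B`. -/
theorem cross {S B : Set V} (hS : AdjClosed Γ S B) {a b : V} (p : Γ.Walk a b)
    (ha : a ∉ S) (hb : b ∈ S) : ∃ z ∈ p.support, z ∈ B := by
  by_contra h
  push_neg at h
  exact ha (propagate (hS := hS) p.reverse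
    (fun z hz => h z (by simpa using hz)) hb)

/-- walks inside the complement of `K` stay in one `componentComplMk`. -/
theorem walk_comp_mem {K : Set V} {a b : V} (p : Γ.Walk a b)
    (hp : ∀ z ∈ p.support, z ∉ K) (ha : a ∉ K) :
    ∀ z ∈ p.support, z ∈ (Γ.componentComplMk ha).supp := by
  induction p with
  | nil =>
    intro z hz
    simp only [Walk.support_nil, List.mem_singleton] at hz
    subst hz
    exact Γ.componentComplMk_mem ha
  | cons h q ih =>
    rename_i u v w
    intro z hz
    have hv : v ∉ K := hp v (by simp)
    have hcomp : Γ.componentComplMk hv = Γ.componentComplMk ha :=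
      (Γ.componentComplMk_eq_of_adj ha hv h).symm
    simp only [Walk.support_cons, List.mem_cons] at hz
    rcases hz with rfl | hz
    · exact Γ.componentComplMk_mem ha
    · have := ih (fun z hz => hp z (by simp [hz])) hv z hz
      rwa [hcomp] at this
variable {V : Type*} {Γ : SimpleGraph V}

theorem supp_adjClosed {K : Set V} (C : Γ.ComponentCompl K) :
    AdjClosed Γ (C.supp) K := by
  intro x hx y hxy hy
  exact SimpleGraph.ComponentCompl.mem_of_adj x y hx hy hxy

theorem supp_iconn {K : Set V} (C : Γ.ComponentCompl K) : IConn Γ C.supp := by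
  intro x hx y hy
  obtain ⟨hxK, hxk⟩ := hx
  obtain ⟨hyK, hyk⟩ := hy
  have hreach : (Γ.induce Kᶜ).Reachable ⟨x, hxK⟩ ⟨y, hyK⟩ := by
    rw [← ConnectedComponent.eq]
    exact hxk.trans hyk.symm
  obtain ⟨q⟩ := hreach
  -- map the induced walk to a walk in Γ whose support avoids K
  have main : ∀ (a b : {v // v ∈ Kᶜ}) (_ : (Γ.induce Kᶜ).Walk a b),
      ∃ p : Γ.Walk a.1 b.1, ∀ z ∈ p.support, z ∉ K := by
    intro a b w
    induction w with
    | nil =>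
      refine ⟨Walk.nil, fun z hz => ?_⟩
      simp only [Walk.support_nil, List.mem_singleton] at hz
      subst hz
      exact (Subtype.coe_prop _ : _ ∈ Kᶜ)
    | cons h q ih =>
      rename_i u v' w'
      obtain ⟨p, hp⟩ := ih
      refine ⟨Walk.cons (by exact h) p, ?_⟩
      intro z hz
      replace hz : z = ↑u ∨ z ∈ p.support := List.mem_cons.mp hz
      rcases hz with rfl | hz
      · exact (Subtype.coe_prop _ : _ ∈ Kᶜ)
      · exact hp z hz
  obtain ⟨p, hp⟩ := main _ _ q
  refine ⟨p, ?_⟩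
  have := walk_comp_mem p hp hxK
  intro z hz
  have h2 := this z hz
  rwa [hxk] at h2

theorem supp_subset_of_avoid {K B : Set V} (C : Γ.ComponentCompl K) {S : Set V}
    (hS : AdjClosed Γ S B) (havoid : ∀ x ∈ C.supp, x ∉ B)
    {x0 : V} (hx0 : x0 ∈ C.supp) (hx0S : x0 ∈ S) : C.supp ⊆ S :=
  iconn_subset hS (supp_iconn C) havoid hx0 hx0S

theorem ball_wconn (hc : Γ.Connected) (v0 : V) (n : ℕ) :
    WConn Γ {u | Γ.dist v0 u ≤ n} v0 := by
  classical
  intro x hx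
  obtain ⟨p, hp⟩ := hc.exists_walk_length_eq_dist v0 x
  refine ⟨p, fun z hz => ?_⟩
  have h1 : Γ.dist v0 z ≤ (p.takeUntil z hz).length := SimpleGraph.dist_le _
  have h2 := SimpleGraph.Walk.length_takeUntil_le p hz
  exact le_trans (le_trans h1 h2) (by rw [hp]; exact hx)

theorem ball_finite (hc : Γ.Connected) (hlf : Γ.LocallyFinite) (v0 : V) :
    ∀ n : ℕ, {u | Γ.dist v0 u ≤ n}.Finite := by
  intro n
  induction n with
  | zero =>
    refine Set.Finite.subset (Set.finite_singleton v0) ?_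
    intro u hu
    simp only [Set.mem_setOf_eq, Nat.le_zero] at hu
    simp [(hc.dist_eq_zero_iff).mp hu]
  | succ n ih =>
    have hsub : {u | Γ.dist v0 u ≤ n + 1} ⊆
        {u | Γ.dist v0 u ≤ n} ∪ ⋃ x ∈ {u | Γ.dist v0 u ≤ n}, Γ.neighborSet x := by
      intro u hu
      simp only [Set.mem_setOf_eq] at hu
      rcases Nat.lt_or_ge (Γ.dist v0 u) (n+1) with h | h
      · exact Or.inl (Nat.lt_succ_iff.mp h)
      · have heq : Γ.dist v0 u = n + 1 := le_antisymm hu h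
        obtain ⟨p, hp⟩ := hc.exists_walk_length_eq_dist v0 u
        cases hq : p.reverse with
        | nil =>
          exfalso
          have : p.length = 0 := by
            have := congrArg SimpleGraph.Walk.length hq
            simpa using this
          omega
        | cons hadj q =>
          rename_i w
          refine Or.inr ?_
          have hwdist : Γ.dist v0 w ≤ n := by
            have h3 : Γ.dist w v0 ≤ q.length := SimpleGraph.dist_le q
            have h4 : q.length = n := by
              have := congrArg SimpleGraph.Walk.length hq
              simp only [SimpleGraph.Walk.length_reverse, SimpleGraph.Walk.length_cons] at this
              omega
            rw [SimpleGraph.dist_comm]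
            omega
          exact Set.mem_biUnion hwdist (by exact hadj.symm)
    refine Set.Finite.subset (ih.union (ih.biUnion (fun x _ => (Γ.neighborSet x).toFinite))) hsub

section Iso
variable (f : Γ ≃g Γ)

theorem adjClosed_image {A B : Set V} (h : AdjClosed Γ A B) :
    AdjClosed Γ (f '' A) (f '' B) := by
  rintro x ⟨a, ha, rfl⟩ y hxy hyB
  have hy : y = f (f.symm y) := (f.apply_symm_apply y).symm
  have hadj : Γ.Adj a (f.symm y) := by
    rw [← f.map_adj_iff]
    simpa [← hy] using hxy
  have hB : f.symm y ∉ B := fun hb => hyB ⟨_, hb, (f.apply_symm_apply y)⟩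
  exact ⟨f.symm y, h ha hadj hB, (f.apply_symm_apply y)⟩

theorem walk_image_support {a b : V} (p : Γ.Walk a b) :
    ∀ z ∈ (p.map f.toHom).support, ∃ w ∈ p.support, f w = z := by
  intro z hz
  rw [SimpleGraph.Walk.support_map, List.mem_map] at hz
  obtain ⟨w, hw, hwz⟩ := hz
  exact ⟨w, hw, hwz⟩

theorem wconn_image {A : Set V} {a0 : V} (h : WConn Γ A a0) :
    WConn Γ (f '' A) (f a0) := by
  rintro x ⟨a, ha, rfl⟩
  obtain ⟨p, hp⟩ := h a ha
  refine ⟨p.map f.toHom, fun z hz => ?_⟩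
  obtain ⟨w, hw, rfl⟩ := walk_image_support f p z hz
  exact ⟨w, hp w hw, rfl⟩

theorem iconn_image {A : Set V} (h : IConn Γ A) : IConn Γ (f '' A) := by
  rintro x ⟨a, ha, rfl⟩ y ⟨b, hb, rfl⟩
  obtain ⟨p, hp⟩ := h a ha b hb
  refine ⟨p.map f.toHom, fun z hz => ?_⟩
  obtain ⟨w, hw, rfl⟩ := walk_image_support f p z hz
  exact ⟨w, hp w hw, rfl⟩

theorem dist_le_iso (u v : V) : Γ.dist (f u) (f v) ≤ Γ.dist u v := by
  rcases Classical.em (Γ.Reachable u v) with h | h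
  · obtain ⟨p, hp⟩ := h.exists_walk_length_eq_dist
    calc Γ.dist (f u) (f v) ≤ (p.map f.toHom).length := SimpleGraph.dist_le _
    _ = Γ.dist u v := by rw [SimpleGraph.Walk.length_map]; exact hp
  · rw [SimpleGraph.dist_eq_zero_of_not_reachable h,
      SimpleGraph.dist_eq_zero_of_not_reachable (fun hr => h ?_)]
    have := hr.map f.symm.toHom
    simpa using this

theorem dist_iso (u v : V) : Γ.dist (f u) (f v) = Γ.dist u v := by
  refine le_antisymm (dist_le_iso f u v) ?_
  have := dist_le_iso f.symm (f u) (f v)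
  simpa using this

end Iso

section Ends
open CategoryTheory Opposite

theorem end_isEmpty_of_finite (Γ : SimpleGraph V) (hfin : Finite V) : IsEmpty Γ.end := by
  constructor
  rintro ⟨s, _⟩
  cases nonempty_fintype V
  obtain ⟨v, h⟩ := (s <| Opposite.op Finset.univ).nonempty
  exact Set.disjoint_iff.mp (s _).disjoint_right ⟨by simp, h⟩

theorem V_infinite (Γ : SimpleGraph V) (hends : Nat.card Γ.end = 2) : Infinite V := by
  rcases finite_or_infinite V with h | h
  · haveI := end_isEmpty_of_finite Γ h
    rw [Nat.card_of_isEmpty] at hends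
    omega
  · exact h

theorem end_supp_infinite' (Γ : SimpleGraph V) (e : Γ.end) (K : (Finset V)ᵒᵖ) :
    ((e : (j : (Finset V)ᵒᵖ) → Γ.componentComplFunctor.obj j) K).supp.Infinite := by
  refine (e.val K).infinite_iff_in_all_ranges.mpr (fun L h => ?_)
  exact ⟨e.val (Opposite.op L), (e.prop (CategoryTheory.opHomOfLE h))⟩

theorem exists_end_eval (Γ : SimpleGraph V) (hconn : Γ.Connected) (hlf : Γ.LocallyFinite)
    [Infinite V] (K' : Finset V) (C : Γ.ComponentCompl (K' : Set V)) (hC : C.supp.Infinite) :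
    ∃ e : Γ.end, e.val (op K') = C := by
  haveI : Fact Γ.Preconnected := ⟨hconn.preconnected⟩
  haveI : LocallyFinite Γ := hlf
  set F := Γ.componentComplFunctor with hF
  haveI hobjfin : ∀ j, Finite (F.obj j) := fun j => Γ.componentCompl_finite j.unop
  haveI hobjne : ∀ j, Nonempty (F.obj j) := fun j => Γ.componentCompl_nonempty_of_infinite j.unop
  have hML : F.IsMittagLeffler :=
    F.isMittagLeffler_of_exists_finite_range (fun j => ⟨j, 𝟙 j, Set.toFinite _⟩)
  have hCev : C ∈ F.eventualRange (op K') := (Γ.infinite_iff_in_eventualRange C).mp hC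
  haveI : ∀ j, Nonempty (F.toEventualRanges.obj j) := fun j => F.toEventualRanges_nonempty hML j
  have hsur := F.surjective_toEventualRanges hML
  obtain ⟨s, hs⟩ := F.toEventualRanges.eval_section_surjective_of_surjective hsur (op K')
    ⟨C, hCev⟩
  refine ⟨F.toEventualRangesSectionsEquiv s, ?_⟩
  have := congrArg Subtype.val hs
  exact this

theorem at_most_two (Γ : SimpleGraph V) (hconn : Γ.Connected) (hlf : Γ.LocallyFinite)
    [Infinite V] (hends : Nat.card Γ.end = 2) (K' : Finset V)
    {C D E : Γ.ComponentCompl (K' : Set V)} (hC : C.supp.Infinite) (hD : D.supp.Infinite)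
    (hE : E.supp.Infinite) : C = D ∨ C = E ∨ D = E := by
  obtain ⟨eC, hval⟩ := exists_end_eval Γ hconn hlf K' C hC
  obtain ⟨eD, hvalD⟩ := exists_end_eval Γ hconn hlf K' D hD
  obtain ⟨eE, hvalE⟩ := exists_end_eval Γ hconn hlf K' E hE
  obtain ⟨x, y, -, huniv⟩ := Nat.card_eq_two_iff.mp hends
  have hmem : ∀ e : Γ.end, e = x ∨ e = y := by
    intro e
    have : e ∈ ({x, y} : Set Γ.end) := huniv ▸ Set.mem_univ e
    simpa using this
  have key : ∀ e e' : Γ.end, e = e' → ∀ (A B : Γ.ComponentCompl (K' : Set V)),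
      e.val (op K') = A → e'.val (op K') = B → A = B := by
    rintro e e' rfl A B rfl rfl; rfl
  rcases hmem eC with rfl | rfl <;> rcases hmem eD with h1 | h1 <;>
    rcases hmem eE with h2 | h2
  · exact Or.inl (key _ _ h1.symm _ _ hval hvalD)
  · exact Or.inl (key _ _ h1.symm _ _ hval hvalD)
  · exact Or.inr (Or.inl (key _ _ h2.symm _ _ hval hvalE))
  · exact Or.inr (Or.inr (key _ _ (h1.trans h2.symm) _ _ hvalD hvalE))
  · exact Or.inr (Or.inr (key _ _ (h1.trans h2.symm) _ _ hvalD hvalE))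
  · exact Or.inr (Or.inl (key _ _ h2.symm _ _ hval hvalE))
  · exact Or.inl (key _ _ h1.symm _ _ hval hvalD)
  · exact Or.inl (key _ _ h1.symm _ _ hval hvalD)

theorem exists_sep (Γ : SimpleGraph V) (hends : Nat.card Γ.end = 2) :
    ∃ (K₀ : Finset V) (e₁ e₂ : Γ.end), e₁.val (op K₀) ≠ e₂.val (op K₀) := by
  obtain ⟨x, y, hxy, -⟩ := Nat.card_eq_two_iff.mp hends
  by_contra h
  push_neg at h
  apply hxy
  refine Subtype.ext (funext fun j => ?_)
  have := h j.unop x y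
  simpa using this

end Ends

section Setting
open Opposite CategoryTheory

theorem supp_unique {K : Set V} {C D : Γ.ComponentCompl K} {x : V}
    (h1 : x ∈ C.supp) (h2 : x ∈ D.supp) : C = D := by
  obtain ⟨hx1, e1⟩ := h1
  obtain ⟨hx2, e2⟩ := h2
  rw [← e1, ← e2]

theorem setting (Γ : SimpleGraph V) (hconn : Γ.Connected) (hlf : Γ.LocallyFinite)
    (hends : Nat.card Γ.end = 2) (v0 : V) :
    ∃ K Cp Cm : Set V, K.Finite ∧ v0 ∈ K ∧ WConn Γ K v0 ∧
      (∀ x, x ∈ K ∨ x ∈ Cp ∨ x ∈ Cm) ∧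
      (∀ x ∈ Cp, x ∉ K) ∧ (∀ x ∈ Cm, x ∉ K) ∧ (∀ x ∈ Cp, x ∉ Cm) ∧
      AdjClosed Γ Cp K ∧ AdjClosed Γ Cm K ∧ IConn Γ Cp ∧ IConn Γ Cm ∧
      Cp.Infinite ∧ Cm.Infinite ∧
      (∃ c ∈ Cp, ∃ k ∈ K, Γ.Adj c k) ∧ (∃ c ∈ Cm, ∃ k ∈ K, Γ.Adj c k) := by
  classical
  haveI : Infinite V := V_infinite Γ hends
  haveI : Fact Γ.Preconnected := ⟨hconn.preconnected⟩
  haveI : LocallyFinite Γ := hlf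
  obtain ⟨K₀, e₁, e₂, hsep⟩ := exists_sep Γ hends
  set n₀ := K₀.sup (Γ.dist v0 ·) with hn₀
  set K₁ : Finset V := (ball_finite hconn hlf v0 n₀).toFinset with hK₁
  have hball : ∀ u, u ∈ K₁ ↔ Γ.dist v0 u ≤ n₀ := by
    intro u; rw [hK₁, Set.Finite.mem_toFinset]; rfl
  have hv0K₁ : v0 ∈ K₁ := (hball v0).mpr (by rw [SimpleGraph.dist_self]; omega)
  have hK01 : K₀ ≤ K₁ := by
    intro k hk
    exact (hball k).mpr (Finset.le_sup (f := (Γ.dist v0 ·)) hk)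
  set C₁ := e₁.val (op K₁) with hC₁
  set C₂ := e₂.val (op K₁) with hC₂
  have hC12 : C₁ ≠ C₂ := by
    intro h
    apply hsep
    rw [← e₁.prop (opHomOfLE hK01), ← e₂.prop (opHomOfLE hK01)]
    exact congrArg _ h
  have hC₁inf : C₁.supp.Infinite := end_supp_infinite' Γ e₁ (op K₁)
  have hC₂inf : C₂.supp.Infinite := end_supp_infinite' Γ e₂ (op K₁)
  have hother : ∀ C : Γ.ComponentCompl (K₁ : Set V), C ≠ C₁ → C ≠ C₂ → C.supp.Finite := by
    intro C h1 h2
    by_contra hinf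
    rcases at_most_two Γ hconn hlf hends K₁ (hinf) hC₁inf hC₂inf with h | h | h
    · exact h1 h
    · exact h2 h
    · exact hC12 h
  set Fin' : Set V :=
    ⋃ C : {C : Γ.ComponentCompl (K₁ : Set V) // C ≠ C₁ ∧ C ≠ C₂}, (C.1.supp) with hFin'
  have hFinfin : Fin'.Finite := Set.finite_iUnion (fun C => hother C.1 C.2.1 C.2.2)
  refine ⟨↑K₁ ∪ Fin', C₁.supp, C₂.supp, (K₁.finite_toSet).union hFinfin, Or.inl hv0K₁, ?_, ?_,
    ?_, ?_, ?_, ?_, ?_, ?_, ?_, ?_, ?_, ?_, ?_⟩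
  -- WConn
  · intro x hx
    rcases hx with hx | hx
    · obtain ⟨p, hp⟩ := ball_wconn hconn v0 n₀ x ((hball x).mp hx)
      exact ⟨p, fun z hz => Or.inl ((hball z).mpr (hp z hz))⟩
    · obtain ⟨C, hC⟩ := Set.mem_iUnion.mp hx
      obtain ⟨⟨c, k⟩, hc, hk, hadj⟩ := C.1.exists_adj_boundary_pair hconn.preconnected
        ⟨v0, hv0K₁⟩
      obtain ⟨p, hp⟩ := supp_iconn C.1 x hC c hc
      obtain ⟨q, hq⟩ := ball_wconn hconn v0 n₀ k ((hball k).mp hk)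
      refine ⟨(p.append (SimpleGraph.Walk.cons hadj q.reverse)).reverse, fun z hz => ?_⟩
      rw [SimpleGraph.Walk.support_reverse, List.mem_reverse,
        SimpleGraph.Walk.mem_support_append_iff] at hz
      rcases hz with hz | hz
      · exact Or.inr (Set.mem_iUnion.mpr ⟨C, hp z hz⟩)
      · rw [SimpleGraph.Walk.support_cons, List.mem_cons] at hz
        rcases hz with rfl | hz
        · exact Or.inr (Set.mem_iUnion.mpr ⟨C, hc⟩)
        · rw [SimpleGraph.Walk.support_reverse, List.mem_reverse] at hz
          exact Or.inl ((hball z).mpr (hq z hz))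
  -- coverage
  · intro x
    by_cases hxK : x ∈ (K₁ : Set V) ∪ Fin'
    · exact Or.inl hxK
    · have hx1 : x ∉ (K₁ : Set V) := fun h => hxK (Or.inl h)
      set C := Γ.componentComplMk hx1 with hC
      by_cases h1 : C = C₁
      · exact Or.inr (Or.inl ⟨hx1, h1 ▸ rfl⟩)
      by_cases h2 : C = C₂
      · exact Or.inr (Or.inr ⟨hx1, h2 ▸ rfl⟩)
      · exact absurd (Or.inr (Set.mem_iUnion.mpr ⟨⟨C, h1, h2⟩, Γ.componentComplMk_mem hx1⟩))
          hxK
  -- Cp ∩ K = ∅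
  · rintro x hx (hK | hF)
    · exact C₁.notMem_of_mem hx hK
    · obtain ⟨C, hC⟩ := Set.mem_iUnion.mp hF
      exact C.2.1 (supp_unique hC hx)
  -- Cm ∩ K = ∅
  · rintro x hx (hK | hF)
    · exact C₂.notMem_of_mem hx hK
    · obtain ⟨C, hC⟩ := Set.mem_iUnion.mp hF
      exact C.2.2 (supp_unique hC hx)
  -- Cp ∩ Cm = ∅
  · intro x hx hx2
    exact hC12 (supp_unique hx hx2)
  -- AdjClosed
  · intro x hx y hxy hy
    exact SimpleGraph.ComponentCompl.mem_of_adj x y hx (fun h => hy (Or.inl h)) hxy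
  · intro x hx y hxy hy
    exact SimpleGraph.ComponentCompl.mem_of_adj x y hx (fun h => hy (Or.inl h)) hxy
  · exact supp_iconn C₁
  · exact supp_iconn C₂
  · exact hC₁inf
  · exact hC₂inf
  · obtain ⟨⟨c, k⟩, hc, hk, hadj⟩ := C₁.exists_adj_boundary_pair hconn.preconnected ⟨v0, hv0K₁⟩
    exact ⟨c, hc, k, Or.inl hk, hadj⟩
  · obtain ⟨⟨c, k⟩, hc, hk, hadj⟩ := C₂.exists_adj_boundary_pair hconn.preconnected ⟨v0, hv0K₁⟩
    exact ⟨c, hc, k, Or.inl hk, hadj⟩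

end Setting

section Action
variable {G : Type*} [Group G]

/-- the graph isomorphism induced by a group element. -/
def actIso (Γ : SimpleGraph V) (act : G →* Equiv.Perm V)
    (hadj : ∀ (g : G) (u v : V), Γ.Adj u v → Γ.Adj (act g u) (act g v)) (g : G) : Γ ≃g Γ where
  toEquiv := act g
  map_rel_iff' := by
    intro a b
    constructor
    · intro h
      have h2 := hadj g⁻¹ _ _ h
      have e : ∀ x : V, act g⁻¹ (act g x) = x := by
        intro x
        have : act g⁻¹ * act g = 1 := by rw [← map_mul, inv_mul_cancel, map_one]
        calc act g⁻¹ (act g x) = (act g⁻¹ * act g) x := rfl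
        _ = x := by rw [this]; rfl
      rwa [e, e] at h2
    · exact hadj g a b

theorem actIso_apply (Γ : SimpleGraph V) (act : G →* Equiv.Perm V)
    (hadj : ∀ (g : G) (u v : V), Γ.Adj u v → Γ.Adj (act g u) (act g v)) (g : G) (x : V) :
    (actIso Γ act hadj g) x = act g x := rfl

theorem actIso_image (Γ : SimpleGraph V) (act : G →* Equiv.Perm V)
    (hadj : ∀ (g : G) (u v : V), Γ.Adj u v → Γ.Adj (act g u) (act g v)) (g : G) (A : Set V) :
    (actIso Γ act hadj g) '' A = act g '' A := rfl

theorem finite_preimage_act (act : G →* Equiv.Perm V)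
    (hfree : ∀ g : G, g ≠ 1 → ∀ v : V, act g v ≠ v) {W : Set V} (hW : W.Finite) (u : V) :
    {g : G | act g u ∈ W}.Finite := by
  have hsub : {g : G | act g u ∈ W} ⊆ ⋃ w ∈ W, {g : G | act g u = w} := by
    intro g hg
    exact Set.mem_biUnion hg rfl
  refine Set.Finite.subset (hW.biUnion fun w _ => ?_) hsub
  refine Set.Subsingleton.finite ?_
  intro g1 h1 g2 h2
  simp only [Set.mem_setOf_eq] at h1 h2
  by_contra hne
  refine hfree (g2⁻¹ * g1) (fun h => hne (by rwa [inv_mul_eq_one, eq_comm] at h)) u ?_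
  have : act (g2⁻¹ * g1) u = act g2⁻¹ (act g1 u) := by rw [map_mul]; rfl
  rw [this, h1, ← h2]
  have : act g2⁻¹ * act g2 = 1 := by rw [← map_mul, inv_mul_cancel, map_one]
  calc act g2⁻¹ (act g2 u) = (act g2⁻¹ * act g2) u := rfl
  _ = u := by rw [this]; rfl

theorem deep_image (Γ : SimpleGraph V) (hconn : Γ.Connected) (f : Γ ≃g Γ)
    {K S : Set V} (hS : AdjClosed Γ S K) (v0 : V) (m : ℕ)
    (hdeep : ∀ k ∈ K, 2*m < Γ.dist (f v0) k) (hfv0 : f v0 ∈ S) :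
    ∀ u, Γ.dist v0 u ≤ m → f u ∈ S := by
  classical
  intro u hu
  obtain ⟨p, hp⟩ := hconn.exists_walk_length_eq_dist (f v0) (f u)
  refine propagate hS p (fun z hz hzK => ?_) hfv0
  have h1 : Γ.dist (f v0) z ≤ (p.takeUntil z hz).length := SimpleGraph.dist_le _
  have h2 := SimpleGraph.Walk.length_takeUntil_le p hz
  have h3 : p.length = Γ.dist v0 u := by rw [hp, dist_iso]
  have h4 := hdeep z hzK
  omega

end Action

section Slab

theorem slab_finite (Γ : SimpleGraph V) (hconn : Γ.Connected) (hlf : Γ.LocallyFinite)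
    (hends : Nat.card Γ.end = 2)
    (K K' Cm S : Set V) (hKfin : K.Finite) (hK'fin : K'.Finite)
    (hACm : AdjClosed Γ Cm K) (hICm : IConn Γ Cm) (hCminf : Cm.Infinite)
    (hAS : AdjClosed Γ S K') (hIS : IConn Γ S) (hSinf : S.Infinite)
    (hCmK : ∀ x ∈ Cm, x ∉ K) (hCmK' : ∀ x ∈ Cm, x ∉ K')
    (hSK : ∀ x ∈ S, x ∉ K) (hSK' : ∀ x ∈ S, x ∉ K')
    (hCmS : ∀ x ∈ Cm, x ∉ S) :
    ((K ∪ K' ∪ Cm ∪ S)ᶜ : Set V).Finite := by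
  classical
  haveI : Infinite V := V_infinite Γ hends
  haveI : Fact Γ.Preconnected := ⟨hconn.preconnected⟩
  haveI : LocallyFinite Γ := hlf
  set K'' : Finset V := (hKfin.union hK'fin).toFinset with hK''
  have hK''mem : ∀ x : V, x ∈ (K'' : Set V) ↔ x ∈ K ∨ x ∈ K' := by
    intro x; rw [hK'']; simp [Set.Finite.mem_toFinset]
  set M : Set V := (K ∪ K' ∪ Cm ∪ S)ᶜ with hM
  have hMmem : ∀ x : V, x ∈ M ↔ x ∉ K ∧ x ∉ K' ∧ x ∉ Cm ∧ x ∉ S := by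
    intro x; rw [hM]; simp [Set.mem_compl_iff, Set.mem_union]; tauto
  by_contra hMinf
  replace hMinf : M.Infinite := hMinf
  have hcover : M ⊆ ⋃ C : Γ.ComponentCompl (K'' : Set V), (C.supp ∩ M) := by
    intro x hx
    obtain ⟨h1, h2, h3, h4⟩ := (hMmem x).mp hx
    have hx' : x ∉ (K'' : Set V) := by
      rw [hK''mem]; tauto
    exact Set.mem_iUnion.mpr ⟨Γ.componentComplMk hx', ⟨Γ.componentComplMk_mem hx', hx⟩⟩
  haveI : Finite (Γ.ComponentCompl (K'' : Set V)) := Γ.componentCompl_finite K''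
  have hCex : ∃ C : Γ.ComponentCompl (K'' : Set V), (C.supp ∩ M).Infinite := by
    by_contra h
    push_neg at h
    exact hMinf (Set.Finite.subset (Set.finite_iUnion h) hcover)
  obtain ⟨C, hCinf⟩ := hCex
  obtain ⟨z0, hz0C, hz0M⟩ := hCinf.nonempty
  have hCsub : C.supp ⊆ M := by
    intro z hz
    have hzK'' : z ∉ (K'' : Set V) := C.notMem_of_mem hz
    have hzK : z ∉ K := fun h => hzK'' ((hK''mem z).mpr (Or.inl h))
    have hzK' : z ∉ K' := fun h => hzK'' ((hK''mem z).mpr (Or.inr h))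
    have hzCm : z ∉ Cm := by
      intro hzCm
      obtain ⟨p, hp⟩ := supp_iconn C z hz z0 hz0C
      have : z0 ∈ Cm := propagate hACm p
        (fun w hw hwK => (C.notMem_of_mem (hp w hw)) ((hK''mem w).mpr (Or.inl hwK))) hzCm
      exact ((hMmem z0).mp hz0M).2.2.1 this
    have hzS : z ∉ S := by
      intro hzS
      obtain ⟨p, hp⟩ := supp_iconn C z hz z0 hz0C
      have : z0 ∈ S := propagate hAS p
        (fun w hw hwK => (C.notMem_of_mem (hp w hw)) ((hK''mem w).mpr (Or.inr hwK))) hzS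
      exact ((hMmem z0).mp hz0M).2.2.2 this
    exact (hMmem z).mpr ⟨hzK, hzK', hzCm, hzS⟩
  obtain ⟨c0, hc0⟩ := hCminf.nonempty
  have hc0K'' : c0 ∉ (K'' : Set V) := by
    rw [hK''mem]; rintro (h | h)
    · exact hCmK c0 hc0 h
    · exact hCmK' c0 hc0 h
  set D := Γ.componentComplMk hc0K'' with hD
  have hCmD : Cm ⊆ D.supp :=
    iconn_subset (supp_adjClosed D) hICm
      (fun x hx => by rw [hK''mem]; rintro (h | h); exacts [hCmK x hx h, hCmK' x hx h])
      hc0 (Γ.componentComplMk_mem hc0K'')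
  obtain ⟨s0, hs0⟩ := hSinf.nonempty
  have hs0K'' : s0 ∉ (K'' : Set V) := by
    rw [hK''mem]; rintro (h | h)
    · exact hSK s0 hs0 h
    · exact hSK' s0 hs0 h
  set E := Γ.componentComplMk hs0K'' with hE
  have hSE : S ⊆ E.supp :=
    iconn_subset (supp_adjClosed E) hIS
      (fun x hx => by rw [hK''mem]; rintro (h | h); exacts [hSK x hx h, hSK' x hx h])
      hs0 (Γ.componentComplMk_mem hs0K'')
  have hCD : C ≠ D := by
    rintro rfl
    exact ((hMmem c0).mp (hCsub (hCmD hc0))).2.2.1 hc0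
  have hCE : C ≠ E := by
    rintro rfl
    exact ((hMmem s0).mp (hCsub (hSE hs0))).2.2.2 hs0
  have hDE : D ≠ E := by
    intro h
    have hs0D : s0 ∈ D.supp := h ▸ Γ.componentComplMk_mem hs0K''
    obtain ⟨p, hp⟩ := supp_iconn D c0 (Γ.componentComplMk_mem hc0K'') s0 hs0D
    have : s0 ∈ Cm := propagate hACm p
      (fun w hw hwK => (D.notMem_of_mem (hp w hw)) ((hK''mem w).mpr (Or.inl hwK))) hc0
    exact hCmS s0 this hs0
  rcases at_most_two Γ hconn hlf hends K'' (hCinf.mono Set.inter_subset_left)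
      (hCminf.mono hCmD) (hSinf.mono hSE) with h | h | h
  · exact hCD h
  · exact hCE h
  · exact hDE h

end Slab

section NoEscape

theorem no_escape {G : Type*} [Group G] (Γ : SimpleGraph V) (hconn : Γ.Connected)
    (act : G →* Equiv.Perm V)
    (hadj : ∀ (g : G) (u v : V), Γ.Adj u v → Γ.Adj (act g u) (act g v))
    (v0 : V) (K Cp Cm : Set V) (hv0 : v0 ∈ K)
    (hKp : ∀ x ∈ Cp, x ∉ K) (hKm : ∀ x ∈ Cm, x ∉ K) (hpm : ∀ x ∈ Cp, x ∉ Cm)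
    (hACm : AdjClosed Γ Cm K)
    (t : G)
    (hIK1 : act t⁻¹ '' K ⊆ Cm) (hICm1 : act t⁻¹ '' Cm ⊆ Cm)
    (htK : act t '' K ⊆ Cp) (htCp : act t '' Cp ⊆ Cp)
    (v : V) (hv : ∀ m : ℕ, act (t ^ m) v ∈ Cm) : False := by
  classical
  have hcomp : ∀ (g h : G) (x : V), act g (act h x) = act (g * h) x := by
    intro g h x; rw [map_mul]; rfl
  have hinvL : ∀ (g : G) (x : V), act g⁻¹ (act g x) = x := by
    intro g x; rw [hcomp, inv_mul_cancel, map_one]; rfl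
  have hinvR : ∀ (g : G) (x : V), act g (act g⁻¹ x) = x := by
    intro g x; rw [hcomp, mul_inv_cancel, map_one]; rfl
  have hmemimg : ∀ (g : G) (A : Set V) (x : V), x ∈ act g '' A ↔ act g⁻¹ x ∈ A := by
    intro g A x
    constructor
    · rintro ⟨a, ha, rfl⟩; rw [hinvL]; exact ha
    · intro h; exact ⟨_, h, hinvR g x⟩
  have himgcomp : ∀ (g h : G) (A : Set V), act g '' (act h '' A) = act (g * h) '' A := by
    intro g h A
    rw [Set.image_image]
    exact Set.image_congr (fun x _ => hcomp g h x)
  -- translates of K on the minus side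
  have hKC : ∀ j : ℕ, 1 ≤ j → act ((t⁻¹) ^ j) '' K ⊆ Cm := by
    intro j hj
    induction j, hj using Nat.le_induction with
    | base => rw [pow_one]; exact hIK1
    | succ j hj ih =>
      have : (t⁻¹) ^ (j+1) = t⁻¹ * (t⁻¹) ^ j := by rw [pow_succ']
      rw [this, ← himgcomp]
      exact (Set.image_mono ih).trans hICm1
  have hv0Cp : ∀ j : ℕ, 1 ≤ j → act (t ^ j) v0 ∈ Cp := by
    intro j hj
    induction j, hj using Nat.le_induction with
    | base => rw [pow_one]; exact htK ⟨v0, hv0, rfl⟩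
    | succ j hj ih =>
      have h1 : t ^ (j+1) = t * t ^ j := by rw [pow_succ']
      rw [h1, ← hcomp]
      exact htCp ⟨_, ih, rfl⟩
  have hinvpow : ∀ j : ℕ, ((t⁻¹) ^ j)⁻¹ = t ^ j := by
    intro j; rw [inv_pow, inv_inv]
  have hvj : ∀ j : ℕ, v ∈ act ((t⁻¹) ^ j) '' Cm := by
    intro j
    rw [hmemimg, hinvpow]
    exact hv j
  have hv0mj : ∀ j : ℕ, 1 ≤ j → v0 ∉ act ((t⁻¹) ^ j) '' Cm := by
    intro j hj h
    rw [hmemimg, hinvpow] at h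
    exact hpm _ (hv0Cp j hj) h
  have hv0kj : ∀ j : ℕ, 1 ≤ j → v0 ∉ act ((t⁻¹) ^ j) '' K := by
    intro j hj h
    rw [hmemimg, hinvpow] at h
    exact hKp _ (hv0Cp j hj) h
  obtain ⟨p⟩ := hconn v0 v
  have hcrossj : ∀ j : ℕ, 1 ≤ j → ∃ z ∈ p.support, z ∈ act ((t⁻¹) ^ j) '' K := by
    intro j hj
    have hAC : AdjClosed Γ (act ((t⁻¹) ^ j) '' Cm) (act ((t⁻¹) ^ j) '' K) := by
      have := adjClosed_image (actIso Γ act hadj ((t⁻¹) ^ j)) hACm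
      rwa [actIso_image, actIso_image] at this
    exact cross hAC p (hv0mj j hj) (hvj j)
  have hdisjj : ∀ j j' : ℕ, 1 ≤ j → j < j' → ∀ z, z ∈ act ((t⁻¹) ^ j) '' K →
      z ∈ act ((t⁻¹) ^ j') '' K → False := by
    intro j j' hj hjj' z hz hz'
    obtain ⟨k, hk, hkz⟩ := hz'
    obtain ⟨k'', hk'', hkz''⟩ := hz
    have hsplit : (t⁻¹) ^ j' = (t⁻¹) ^ j * (t⁻¹) ^ (j' - j) := by
      rw [← pow_add]
      congr 1
      omega
    have h1 : act ((t⁻¹) ^ (j' - j)) k ∈ Cm :=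
      hKC (j' - j) (by omega) ⟨k, hk, rfl⟩
    have h2 : act ((t⁻¹) ^ j) (act ((t⁻¹) ^ (j' - j)) k) = act ((t⁻¹) ^ j) k'' := by
      rw [hcomp, ← hsplit, hkz, hkz'']
    have h3 : act ((t⁻¹) ^ (j' - j)) k = k'' := (act ((t⁻¹) ^ j)).injective h2
    exact hKm _ h1 (h3 ▸ hk'')
  -- pigeonhole
  set N := p.support.toFinset.card with hN
  set F : ℕ → V := fun j =>
    if h : ∃ z ∈ p.support, z ∈ act ((t⁻¹) ^ j) '' K then h.choose else v0 with hF
  have hFmem : ∀ j ∈ Finset.Icc 1 (N+1), F j ∈ p.support.toFinset ∧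
      F j ∈ act ((t⁻¹) ^ j) '' K := by
    intro j hj
    rw [Finset.mem_Icc] at hj
    have h := hcrossj j hj.1
    rw [hF]
    simp only [h, dif_pos]
    obtain ⟨h1, h2⟩ := h.choose_spec
    exact ⟨List.mem_toFinset.mpr h1, h2⟩
  have hinj : Set.InjOn F (Finset.Icc 1 (N+1)) := by
    intro a ha b hb hab
    by_contra hne
    rcases Nat.lt_or_ge a b with h | h
    · exact hdisjj a b (Finset.mem_Icc.mp ha).1 h (F a)
        (hFmem a ha).2 (hab ▸ (hFmem b hb).2)
    · have hba : b < a := by omega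
      exact hdisjj b a (Finset.mem_Icc.mp hb).1 hba (F b)
        (hFmem b hb).2 (hab ▸ (hFmem a ha).2)
  have hcard := Finset.card_le_card_of_injOn F (fun j hj => (hFmem j hj).1) hinj
  rw [Nat.card_Icc] at hcard
  omega

end NoEscape

section Covering

theorem covering {G : Type*} [Group G] (Γ : SimpleGraph V) (hconn : Γ.Connected)
    (hlf : Γ.LocallyFinite) (hends : Nat.card Γ.end = 2)
    (act : G →* Equiv.Perm V)
    (hadj : ∀ (g : G) (u v : V), Γ.Adj u v → Γ.Adj (act g u) (act g v))
    (v0 : V) (K Cp Cm : Set V) (hKfin : K.Finite) (hv0 : v0 ∈ K)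
    (hcov : ∀ x, x ∈ K ∨ x ∈ Cp ∨ x ∈ Cm)
    (hKp : ∀ x ∈ Cp, x ∉ K) (hKm : ∀ x ∈ Cm, x ∉ K) (hpm : ∀ x ∈ Cp, x ∉ Cm)
    (hACp : AdjClosed Γ Cp K) (hACm : AdjClosed Γ Cm K)
    (hICp : IConn Γ Cp) (hICm : IConn Γ Cm)
    (hCpinf : Cp.Infinite) (hCminf : Cm.Infinite)
    (t : G) (hT1 : act t '' K ⊆ Cp) (hT2 : K ⊆ act t '' Cm) (hT3 : Cm ⊆ act t '' Cm) :
    ∃ L : Set V, L.Finite ∧ ∀ v : V, ∃ g : G, ∃ l ∈ L, act g l = v := by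
  classical
  have hcomp : ∀ (g h : G) (x : V), act g (act h x) = act (g * h) x := by
    intro g h x; rw [map_mul]; rfl
  have hinvL : ∀ (g : G) (x : V), act g⁻¹ (act g x) = x := by
    intro g x; rw [hcomp, inv_mul_cancel, map_one]; rfl
  have hinvR : ∀ (g : G) (x : V), act g (act g⁻¹ x) = x := by
    intro g x; rw [hcomp, mul_inv_cancel, map_one]; rfl
  have hmemimg : ∀ (g : G) (A : Set V) (x : V), x ∈ act g '' A ↔ act g⁻¹ x ∈ A := by
    intro g A x
    constructor
    · rintro ⟨a, ha, rfl⟩; rw [hinvL]; exact ha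
    · intro h; exact ⟨_, h, hinvR g x⟩
  have hone : ∀ x : V, act (1 : G) x = x := by
    intro x; rw [map_one]; rfl
  have hIK1 : act t⁻¹ '' K ⊆ Cm := by
    rintro x ⟨k, hk, rfl⟩
    exact (hmemimg t Cm k).mp (hT2 hk)
  have hICm1 : act t⁻¹ '' Cm ⊆ Cm := by
    rintro x ⟨c, hc, rfl⟩
    exact (hmemimg t Cm c).mp (hT3 hc)
  have hF1 : act t '' Cp ⊆ Cp := by
    intro x hx
    have hxK : x ∉ K := by
      intro h
      have := (hmemimg t Cm x).mp (hT2 h)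
      have hxp := (hmemimg t Cp x).mp hx
      exact hpm _ hxp this
    have hxCm : x ∉ Cm := by
      intro h
      have := (hmemimg t Cm x).mp (hT3 h)
      exact hpm _ ((hmemimg t Cp x).mp hx) this
    have hxtK : x ∉ act t '' K := by
      intro h
      exact hKp _ ((hmemimg t Cp x).mp hx) ((hmemimg t K x).mp h)
    rcases hcov x with h | h | h
    · exact absurd h hxK
    · exact h
    · exact absurd h hxCm
  set S : Set V := act t '' Cp with hS
  have hAS : AdjClosed Γ S (act t '' K) := by
    have := adjClosed_image (actIso Γ act hadj t) hACp
    rwa [actIso_image, actIso_image] at this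
  have hIS : IConn Γ S := by
    have := iconn_image (actIso Γ act hadj t) hICp
    rwa [actIso_image] at this
  have hSinf : S.Infinite := hCpinf.image ((act t).injective.injOn)
  have hCmK' : ∀ x ∈ Cm, x ∉ act t '' K := by
    intro x hx h
    exact hpm x (hT1 h) hx
  have hSsub : S ⊆ Cp := hF1
  have hSK : ∀ x ∈ S, x ∉ K := fun x hx => hKp x (hSsub hx)
  have hSK' : ∀ x ∈ S, x ∉ act t '' K := by
    intro x hx h
    exact hKp _ ((hmemimg t Cp x).mp hx) ((hmemimg t K x).mp h)
  have hCmS : ∀ x ∈ Cm, x ∉ S := fun x hx h => hpm x (hSsub h) hx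
  have hM : ((K ∪ act t '' K ∪ Cm ∪ S)ᶜ : Set V).Finite :=
    slab_finite Γ hconn hlf hends K (act t '' K) Cm S hKfin (hKfin.image _)
      hACm hICm hCminf hAS hIS hSinf hKm hCmK' hSK hSK' hCmS
  refine ⟨K ∪ act t '' K ∪ (K ∪ act t '' K ∪ Cm ∪ S)ᶜ,
    (hKfin.union (hKfin.image _)).union hM, ?_⟩
  intro v
  set L : Set V := K ∪ act t '' K ∪ (K ∪ act t '' K ∪ Cm ∪ S)ᶜ with hL
  have hLc : ∀ x, x ∉ L → x ∈ Cm ∨ x ∈ S := by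
    intro x hx
    by_cases h1 : x ∈ Cm
    · exact Or.inl h1
    by_cases h2 : x ∈ S
    · exact Or.inr h2
    exfalso
    apply hx
    rw [hL]
    by_cases h3 : x ∈ K
    · exact Or.inl (Or.inl h3)
    by_cases h4 : x ∈ act t '' K
    · exact Or.inl (Or.inr h4)
    · refine Or.inr ?_
      intro hmem
      rcases hmem with ((h | h) | h) | h
      · exact h3 h
      · exact h4 h
      · exact h1 h
      · exact h2 h
  have key : ∃ m : ℕ, act (t ^ m) v ∈ L ∨ act ((t⁻¹) ^ m) v ∈ L := by
    by_contra hnone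
    push_neg at hnone
    have hv0L : v ∉ L := by
      have := (hnone 0).1
      rwa [pow_zero, hone] at this
    have htCmS : ∀ x, x ∈ act t '' Cm → x ∈ S → False := by
      intro x h1 h2
      exact hpm _ ((hmemimg t Cp x).mp h2) ((hmemimg t Cm x).mp h1)
    rcases hLc v hv0L with hvCm | hvS
    · -- forward orbit stays in Cm
      have hfor : ∀ m : ℕ, act (t ^ m) v ∈ Cm := by
        intro m
        induction m with
        | zero => rwa [pow_zero, hone]
        | succ m ih =>
          have he : act (t ^ (m+1)) v = act t (act (t ^ m) v) := by
            rw [hcomp, ← pow_succ']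
          have h1 : act (t ^ (m+1)) v ∈ act t '' Cm := by
            rw [he]; exact ⟨_, ih, rfl⟩
          rcases hLc _ (hnone (m+1)).1 with h | h
          · exact h
          · exact absurd h (fun h' => htCmS _ h1 h')
      exact no_escape Γ hconn act hadj v0 K Cp Cm hv0 hKp hKm hpm hACm t
        hIK1 hICm1 hT1 hF1 v hfor
    · -- backward orbit stays in S
      have hback : ∀ m : ℕ, act ((t⁻¹) ^ m) v ∈ S := by
        intro m
        induction m with
        | zero => rwa [pow_zero, hone]
        | succ m ih =>
          have he : act ((t⁻¹) ^ (m+1)) v = act t⁻¹ (act ((t⁻¹) ^ m) v) := by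
            rw [hcomp, ← pow_succ']
          have h1 : act ((t⁻¹) ^ (m+1)) v ∈ Cp := by
            rw [he]
            exact (hmemimg t Cp _).mp ih
          rcases hLc _ (hnone (m+1)).2 with h | h
          · exact absurd h (hpm _ h1)
          · exact h
      have hforCp : ∀ m : ℕ, act ((t⁻¹) ^ m) v ∈ Cp := fun m => hSsub (hback m)
      exact no_escape Γ hconn act hadj v0 K Cm Cp hv0 hKm hKp
        (fun x hx hx2 => hpm x hx2 hx) hACp t⁻¹
        (by rw [inv_inv]; exact hT1) (by rw [inv_inv]; exact hF1) hIK1 hICm1 v hforCp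
  obtain ⟨m, hm | hm⟩ := key
  · exact ⟨(t ^ m)⁻¹, act (t ^ m) v, hm, hinvL _ _⟩
  · exact ⟨((t⁻¹) ^ m)⁻¹, act ((t⁻¹) ^ m) v, hm, hinvL _ _⟩

end Covering

section MainSide

theorem main_side {G : Type*} [Group G] (Γ : SimpleGraph V) (hconn : Γ.Connected)
    (hlf : Γ.LocallyFinite) (hends : Nat.card Γ.end = 2)
    (act : G →* Equiv.Perm V)
    (hadj : ∀ (g : G) (u v : V), Γ.Adj u v → Γ.Adj (act g u) (act g v))
    (hfree : ∀ g : G, g ≠ 1 → ∀ v : V, act g v ≠ v)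
    (v0 : V) (K Cp Cm : Set V) (hKfin : K.Finite) (hv0 : v0 ∈ K) (hKw : WConn Γ K v0)
    (hcov : ∀ x, x ∈ K ∨ x ∈ Cp ∨ x ∈ Cm)
    (hKp : ∀ x ∈ Cp, x ∉ K) (hKm : ∀ x ∈ Cm, x ∉ K) (hpm : ∀ x ∈ Cp, x ∉ Cm)
    (hACp : AdjClosed Γ Cp K) (hACm : AdjClosed Γ Cm K)
    (hICp : IConn Γ Cp) (hICm : IConn Γ Cm)
    (hCpinf : Cp.Infinite) (hCminf : Cm.Infinite)
    (hbdm : ∃ c ∈ Cm, ∃ k ∈ K, Γ.Adj c k)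
    (horb : {g : G | act g v0 ∈ Cp}.Infinite) :
    ∃ L : Set V, L.Finite ∧ ∀ v : V, ∃ g : G, ∃ l ∈ L, act g l = v := by
  classical
  have hcomp : ∀ (g h : G) (x : V), act g (act h x) = act (g * h) x := by
    intro g h x; rw [map_mul]; rfl
  have hinvL : ∀ (g : G) (x : V), act g⁻¹ (act g x) = x := by
    intro g x; rw [hcomp, inv_mul_cancel, map_one]; rfl
  have hinvR : ∀ (g : G) (x : V), act g (act g⁻¹ x) = x := by
    intro g x; rw [hcomp, mul_inv_cancel, map_one]; rfl
  have hmemimg : ∀ (g : G) (A : Set V) (x : V), x ∈ act g '' A ↔ act g⁻¹ x ∈ A := by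
    intro g A x
    constructor
    · rintro ⟨a, ha, rfl⟩; rw [hinvL]; exact ha
    · intro h; exact ⟨_, h, hinvR g x⟩
  -- radius of K
  set n : ℕ := hKfin.toFinset.sup (Γ.dist v0 ·) with hn
  have hKball : ∀ k ∈ K, Γ.dist v0 k ≤ n :=
    fun k hk => Finset.le_sup (f := (Γ.dist v0 ·)) (hKfin.mem_toFinset.mpr hk)
  -- existence of arbitrarily deep elements with image of v0 in Cp
  have hdeepex : ∀ m : ℕ, ∃ g : G, act g v0 ∈ Cp ∧ ∀ k ∈ K, 2*m < Γ.dist (act g v0) k := by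
    intro m
    have hBfin : {u | Γ.dist v0 u ≤ 2*m + n}.Finite := ball_finite hconn hlf v0 _
    have hGfin : {g : G | act g v0 ∈ {u | Γ.dist v0 u ≤ 2*m + n}}.Finite :=
      finite_preimage_act act hfree hBfin v0
    obtain ⟨g, hgmem, hgnot⟩ := (horb.diff hGfin).nonempty
    refine ⟨g, hgmem, ?_⟩
    intro k hk
    by_contra hle
    push_neg at hle
    apply hgnot
    have h1 : Γ.dist v0 (act g v0) ≤ Γ.dist v0 k + Γ.dist k (act g v0) := hconn.dist_triangle
    have h2 : Γ.dist k (act g v0) = Γ.dist (act g v0) k := SimpleGraph.dist_comm ..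
    have h3 := hKball k hk
    simp only [Set.mem_setOf_eq]
    omega
  -- adjacency-closedness and connectivity of images
  have hAgp : ∀ g : G, AdjClosed Γ (act g '' Cp) (act g '' K) := by
    intro g
    have := adjClosed_image (actIso Γ act hadj g) hACp
    rwa [actIso_image, actIso_image] at this
  have hAgm : ∀ g : G, AdjClosed Γ (act g '' Cm) (act g '' K) := by
    intro g
    have := adjClosed_image (actIso Γ act hadj g) hACm
    rwa [actIso_image, actIso_image] at this
  -- classification of deep elements
  have hclass : ∀ g : G, act g v0 ∈ Cp → (∀ k ∈ K, 2*n < Γ.dist (act g v0) k) →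
      (act g '' K ⊆ Cp) ∧
      ((K ⊆ act g '' Cm ∧ Cm ⊆ act g '' Cm) ∨ (K ⊆ act g '' Cp ∧ Cm ⊆ act g '' Cp)) := by
    intro g hgv0 hgdeep
    have hgK : act g '' K ⊆ Cp := by
      rintro x ⟨k, hk, rfl⟩
      have := deep_image Γ hconn (actIso Γ act hadj g) hACp v0 n
        (fun k hk => by rw [actIso_apply]; exact hgdeep k hk)
        (by rw [actIso_apply]; exact hgv0) k (hKball k hk)
      rwa [actIso_apply] at this
    refine ⟨hgK, ?_⟩
    have hKgK : ∀ x ∈ K, x ∉ act g '' K := fun x hx h => hKp x (hgK h) hx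
    have hv0gK : v0 ∉ act g '' K := hKgK v0 hv0
    have hv0side : v0 ∈ act g '' Cp ∨ v0 ∈ act g '' Cm := by
      rcases hcov (act g⁻¹ v0) with h | h | h
      · exact absurd ((hmemimg g K v0).mpr h) hv0gK
      · exact Or.inl ((hmemimg g Cp v0).mpr h)
      · exact Or.inr ((hmemimg g Cm v0).mpr h)
    obtain ⟨c, hc, k, hk, hadjck⟩ := hbdm
    have hcgK : c ∉ act g '' K := fun h => hpm c (hgK h) hc
    rcases hv0side with hside | hside
    · refine Or.inr ⟨?_, ?_⟩
      · exact wconn_subset (hAgp g) hKw hKgK hside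
      · have hkmem : k ∈ act g '' Cp := wconn_subset (hAgp g) hKw hKgK hside hk
        have hcmem : c ∈ act g '' Cp := hAgp g hkmem hadjck.symm hcgK
        exact iconn_subset (hAgp g) hICm (fun x hx h => hpm x (hgK h) hx) hc hcmem
    · refine Or.inl ⟨?_, ?_⟩
      · exact wconn_subset (hAgm g) hKw hKgK hside
      · have hkmem : k ∈ act g '' Cm := wconn_subset (hAgm g) hKw hKgK hside hk
        have hcmem : c ∈ act g '' Cm := hAgm g hkmem hadjck.symm hcgK
        exact iconn_subset (hAgm g) hICm (fun x hx h => hpm x (hgK h) hx) hc hcmem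
  by_cases htrans : ∃ g : G, (act g v0 ∈ Cp ∧ ∀ k ∈ K, 2*n < Γ.dist (act g v0) k) ∧
      K ⊆ act g '' Cm ∧ Cm ⊆ act g '' Cm
  · obtain ⟨t, ⟨h1, h2⟩, hT2, hT3⟩ := htrans
    exact covering Γ hconn hlf hends act hadj v0 K Cp Cm hKfin hv0 hcov hKp hKm hpm
      hACp hACm hICp hICm hCpinf hCminf t (hclass t h1 h2).1 hT2 hT3
  · -- all deep elements swap the two sides
    obtain ⟨g, hgv0, hgdeep⟩ := hdeepex n
    have hgK := (hclass g hgv0 hgdeep).1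
    have hgswap : K ⊆ act g '' Cp ∧ Cm ⊆ act g '' Cp := by
      rcases (hclass g hgv0 hgdeep).2 with h | h
      · exact absurd ⟨g, ⟨hgv0, hgdeep⟩, h⟩ htrans
      · exact h
    have hdisjgpm : ∀ x, x ∈ act g '' Cp → x ∈ act g '' Cm → False := by
      intro x h1 h2
      exact hpm _ ((hmemimg g Cp x).mp h1) ((hmemimg g Cm x).mp h2)
    have hgCm : act g '' Cm ⊆ Cp := by
      intro x hx
      rcases hcov x with h | h | h
      · exact absurd hx (fun hx' => hdisjgpm x (hgswap.1 h) hx')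
      · exact h
      · exact absurd hx (fun hx' => hdisjgpm x (hgswap.2 h) hx')
    have hIgm : IConn Γ (act g '' Cm) := by
      have := iconn_image (actIso Γ act hadj g) hICm
      rwa [actIso_image] at this
    have hMg : ((K ∪ act g '' K ∪ Cm ∪ act g '' Cm)ᶜ : Set V).Finite := by
      refine slab_finite Γ hconn hlf hends K (act g '' K) Cm (act g '' Cm) hKfin
        (hKfin.image _) hACm hICm hCminf (hAgm g) hIgm
        (hCminf.image ((act g).injective.injOn)) hKm
        (fun x hx h => hpm x (hgK h) hx)
        (fun x hx => hKp x (hgCm hx))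
        (fun x hx h => hKm _ ((hmemimg g Cm x).mp hx) ((hmemimg g K x).mp h))
        (fun x hx h => hdisjgpm x (hgswap.2 hx) h)
    set W : Set V := K ∪ act g '' K ∪ (K ∪ act g '' K ∪ Cm ∪ act g '' Cm)ᶜ with hW
    have hWfin : W.Finite := (hKfin.union (hKfin.image _)).union hMg
    set r₂ : ℕ := max n (hWfin.toFinset.sup (Γ.dist v0 ·)) with hr₂
    have hWball : ∀ x ∈ W, Γ.dist v0 x ≤ r₂ := fun x hx =>
      le_trans (Finset.le_sup (f := (Γ.dist v0 ·)) (hWfin.mem_toFinset.mpr hx)) (le_max_right _ _)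
    obtain ⟨h, hhv0, hhdeep⟩ := hdeepex r₂
    have hhdeepn : ∀ k ∈ K, 2*n < Γ.dist (act h v0) k := by
      intro k hk
      have h1 := hhdeep k hk
      have h2 : n ≤ r₂ := le_max_left _ _
      omega
    have hhK := (hclass h hhv0 hhdeepn).1
    have hhswap : K ⊆ act h '' Cp ∧ Cm ⊆ act h '' Cp := by
      rcases (hclass h hhv0 hhdeepn).2 with h' | h'
      · exact absurd ⟨h, ⟨hhv0, hhdeepn⟩, h'⟩ htrans
      · exact h'
    set t : G := h * g with ht
    have hT1 : act t '' K ⊆ Cp := by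
      rintro x ⟨k, hk, rfl⟩
      have he : act t k = act h (act g k) := (hcomp h g k).symm
      have hgkW : act g k ∈ W := by
        rw [hW]; exact Or.inl (Or.inr ⟨k, hk, rfl⟩)
      have := deep_image Γ hconn (actIso Γ act hadj h) hACp v0 r₂
        (fun k' hk' => by rw [actIso_apply]; exact hhdeep k' hk')
        (by rw [actIso_apply]; exact hhv0) (act g k) (hWball _ hgkW)
      rw [actIso_apply] at this
      rw [he]
      exact this
    have hinvK : act h⁻¹ '' K ⊆ Cp := by
      rintro x ⟨k, hk, rfl⟩
      exact (hmemimg h Cp k).mp (hhswap.1 hk)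
    have hinvKgK : ∀ x ∈ act h⁻¹ '' K, x ∉ act g '' K := by
      rintro x ⟨k, hk, rfl⟩ hxg
      obtain ⟨k', hk', he⟩ := hxg
      have he2 : act t k' = k := by
        rw [ht, ← hcomp, he, hinvR]
      exact hKp k (he2 ▸ hT1 ⟨k', hk', rfl⟩) hk
    have hWc : WConn Γ (act h⁻¹ '' K) (act h⁻¹ v0) := by
      have := wconn_image (actIso Γ act hadj h⁻¹) hKw
      rwa [actIso_image] at this
    have hdistinv : r₂ < Γ.dist v0 (act h⁻¹ v0) := by
      have h1 := dist_iso (actIso Γ act hadj h) v0 (act h⁻¹ v0)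
      rw [actIso_apply, actIso_apply, hinvR] at h1
      have h2 := hhdeep v0 hv0
      omega
    have hside : act h⁻¹ v0 ∈ act g '' Cm := by
      have hnK : act h⁻¹ v0 ∉ act g '' K := hinvKgK _ ⟨v0, hv0, rfl⟩
      rcases hcov (act g⁻¹ (act h⁻¹ v0)) with hh | hh | hh
      · exact absurd ((hmemimg g K _).mpr hh) hnK
      · exfalso
        have hxgp : act h⁻¹ v0 ∈ act g '' Cp := (hmemimg g Cp _).mpr hh
        have hxCp : act h⁻¹ v0 ∈ Cp := hinvK ⟨v0, hv0, rfl⟩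
        have hxW : act h⁻¹ v0 ∈ W := by
          rw [hW]
          refine Or.inr ?_
          intro hmem
          rcases hmem with ((hmem | hmem) | hmem) | hmem
          · exact hKp _ hxCp hmem
          · exact hnK hmem
          · exact hpm _ hxCp hmem
          · exact hdisjgpm _ hxgp hmem
        have := hWball _ hxW
        omega
      · exact (hmemimg g Cm _).mpr hh
    have hinvKsub : act h⁻¹ '' K ⊆ act g '' Cm :=
      wconn_subset (hAgm g) hWc hinvKgK hside
    have hinvCmCp : act h⁻¹ '' Cm ⊆ Cp := by
      rintro x ⟨c, hc, rfl⟩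
      exact (hmemimg h Cp c).mp (hhswap.2 hc)
    have hinvCmgK : ∀ x ∈ act h⁻¹ '' Cm, x ∉ act g '' K := by
      rintro x ⟨c, hc, rfl⟩ hxg
      obtain ⟨k', hk', he⟩ := hxg
      have he2 : act t k' = c := by
        rw [ht, ← hcomp, he, hinvR]
      exact hpm c (he2 ▸ hT1 ⟨k', hk', rfl⟩) hc
    have hICminv : IConn Γ (act h⁻¹ '' Cm) := by
      have := iconn_image (actIso Γ act hadj h⁻¹) hICm
      rwa [actIso_image] at this
    obtain ⟨c, hc, k, hk, hadjck⟩ := hbdm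
    have hkmem : act h⁻¹ k ∈ act g '' Cm := hinvKsub ⟨k, hk, rfl⟩
    have hcadj : Γ.Adj (act h⁻¹ k) (act h⁻¹ c) := hadj h⁻¹ _ _ hadjck.symm
    have hcnot : act h⁻¹ c ∉ act g '' K := hinvCmgK _ ⟨c, hc, rfl⟩
    have hcmem : act h⁻¹ c ∈ act g '' Cm := hAgm g hkmem hcadj hcnot
    have hinvCmsub : act h⁻¹ '' Cm ⊆ act g '' Cm :=
      iconn_subset (hAgm g) hICminv hinvCmgK ⟨c, hc, rfl⟩ hcmem
    have htinv : ∀ x : V, act t⁻¹ x = act g⁻¹ (act h⁻¹ x) := by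
      intro x
      rw [hcomp, ht, mul_inv_rev]
    have hT2 : K ⊆ act t '' Cm := by
      intro k0 hk0
      rw [hmemimg, htinv]
      exact (hmemimg g Cm _).mp (hinvKsub ⟨k0, hk0, rfl⟩)
    have hT3 : Cm ⊆ act t '' Cm := by
      intro c0 hc0
      rw [hmemimg, htinv]
      exact (hmemimg g Cm _).mp (hinvCmsub ⟨c0, hc0, rfl⟩)
    exact covering Γ hconn hlf hends act hadj v0 K Cp Cm hKfin hv0 hcov hKp hKm hpm
      hACp hACm hICp hICm hCpinf hCminf t hT1 hT2 hT3

end MainSide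

end TwoEnds
/-- If an infinite group acts freely by automorphisms on a connected locally finite graph
with exactly two ends, then the action has finitely many orbits of vertices: there is a
finite set `L` of vertices whose translates cover all of `Γ`. -/
theorem finitely_many_orbits {V G : Type*} [Group G] [Infinite G]
    (Γ : SimpleGraph V) (hconn : Γ.Connected) (hlf : Γ.LocallyFinite)
    (act : G →* Equiv.Perm V)
    (hadj : ∀ (g : G) (u v : V), Γ.Adj u v → Γ.Adj (act g u) (act g v))
    (hfree : ∀ g : G, g ≠ 1 → ∀ v : V, act g v ≠ v)
    (hends : Nat.card Γ.end = 2) :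
    ∃ L : Set V, L.Finite ∧ ∀ v : V, ∃ g : G, ∃ l ∈ L, act g l = v := by
  classical
  obtain ⟨v0⟩ := hconn.nonempty
  obtain ⟨K, Cp, Cm, hKfin, hv0, hKw, hcov, hKp, hKm, hpm, hACp, hACm, hICp, hICm,
    hCpinf, hCminf, hbdp, hbdm⟩ := TwoEnds.setting Γ hconn hlf hends v0
  have hKG : {g : G | act g v0 ∈ K}.Finite := TwoEnds.finite_preimage_act act hfree hKfin v0
  have hside : {g : G | act g v0 ∈ Cp}.Infinite ∨ {g : G | act g v0 ∈ Cm}.Infinite := by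
    by_contra hno
    push_neg at hno
    have huniv : (Set.univ : Set G) ⊆
        {g : G | act g v0 ∈ K} ∪ {g : G | act g v0 ∈ Cp} ∪ {g : G | act g v0 ∈ Cm} := by
      intro g _
      rcases hcov (act g v0) with h | h | h
      · exact Or.inl (Or.inl h)
      · exact Or.inl (Or.inr h)
      · exact Or.inr h
    have : (Set.univ : Set G).Finite :=
      Set.Finite.subset ((hKG.union hno.1).union hno.2) huniv
    exact Set.infinite_univ this
  rcases hside with h | h
  · exact TwoEnds.main_side Γ hconn hlf hends act hadj hfree v0 K Cp Cm hKfin hv0 hKw hcov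
      hKp hKm hpm hACp hACm hICp hICm hCpinf hCminf hbdm h
  · refine TwoEnds.main_side Γ hconn hlf hends act hadj hfree v0 K Cm Cp hKfin hv0 hKw
      (fun x => ?_) hKm hKp (fun x hx hx2 => hpm x hx2 hx) hACm hACp hICm hICp
      hCminf hCpinf hbdp h
    rcases hcov x with h' | h' | h'
    · exact Or.inl h'
    · exact Or.inr (Or.inr h')
    · exact Or.inr (Or.inl h')
end

section
/- Let G be a group with finite generating set S, and let H be a subgroup of G such that H has infinite index in its normalizer N_G(H) = { g ∈ G : g⁻¹Hg = H }. Then the end space of the quotient graph H\Γ(G,S) is nonempty, and it has exactly one element, exactly two elements, or is infinite; that is, e(G,H) = 1, 2 or ∞. -/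
/-- The quotient graph `H\Γ(G,S)` of the Cayley graph of `G` with respect to `S` by the
left action of a subgroup `H`: vertices are the right cosets `Hg`, and two distinct
cosets are adjacent iff one is obtained from the other by right multiplication by an
element of `S ∪ S⁻¹`. -/
def quotientGraph {G : Type*} [Group G] (S : Set G) (H : Subgroup G) :
    SimpleGraph (Quotient (QuotientGroup.rightRel H)) where
  Adj x y := x ≠ y ∧ ∃ k s, s ∈ S ∪ S⁻¹ ∧ x = Quotient.mk _ k ∧ y = Quotient.mk _ (k * s)
  symm := by
    constructor
    rintro x y ⟨hne, k, s, hs, rfl, rfl⟩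
    refine ⟨hne.symm, k * s, s⁻¹, ?_, rfl, by rw [mul_assoc, mul_inv_cancel, mul_one]⟩
    rcases hs with h1 | h1
    · exact Or.inr (Set.inv_mem_inv.mpr h1)
    · exact Or.inl (by simpa using Set.mem_inv.mp h1)
  loopless := ⟨fun x h => h.1 rfl⟩

open SimpleGraph CategoryTheory Opposite

universe u

namespace RelEnds

variable {V : Type u} {G : SimpleGraph V}

lemma mk_eq_of_walk {K : Set V} {u v : V} (p : G.Walk u v)
    (hp : ∀ x ∈ p.support, x ∉ K) :
    G.componentComplMk (hp u p.start_mem_support) =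
      G.componentComplMk (hp v p.end_mem_support) := by
  induction p with
  | nil => rfl
  | @cons a b c h q ih =>
      have hb : b ∉ K := hp b (by simp)
      have ha : a ∉ K := hp a (by simp)
      exact (G.componentComplMk_eq_of_adj ha hb h).trans
        (ih (fun x hx => hp x (by simp [hx])))

lemma mk_eq_of_induce_walk {A K : Set V} {C : G.ComponentCompl A}
    (hCK : ∀ x, x ∈ C → x ∉ K) :
    ∀ {a b : ↥(Aᶜ)} (_ : (G.induce Aᶜ).Walk a b) (ha : (a : V) ∈ C) (hb : (b : V) ∈ C),
      G.componentComplMk (hCK a ha) = G.componentComplMk (hCK b hb) := by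
  intro a b q
  induction q with
  | nil => intro _ _; rfl
  | @cons a x b h q ih =>
      intro ha hb
      have hadj : G.Adj (a : V) (x : V) := h
      have hx : (x : V) ∈ C := ComponentCompl.mem_of_adj (a : V) (x : V) ha x.prop hadj
      exact (G.componentComplMk_eq_of_adj (hCK a ha) (hCK x hx) hadj).trans (ih hx hb)

lemma mk_eq_of_mem_component {A K : Set V} {C : G.ComponentCompl A}
    (hCK : ∀ x, x ∈ C → x ∉ K) {u v : V} (hu : u ∈ C) (hv : v ∈ C) :
    G.componentComplMk (hCK u hu) = G.componentComplMk (hCK v hv) := by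
  obtain ⟨hunA, hCu⟩ := id hu
  obtain ⟨hvnA, hCv⟩ := id hv
  have hreach : (G.induce Aᶜ).Reachable ⟨u, hunA⟩ ⟨v, hvnA⟩ :=
    SimpleGraph.ConnectedComponent.exact (hCu.trans hCv.symm)
  obtain ⟨q⟩ := hreach
  exact mk_eq_of_induce_walk hCK q hu hv

lemma mk_congr {K : Set V} {v w : V} (h : v = w) (hv : v ∉ K) (hw : w ∉ K) :
    G.componentComplMk hv = G.componentComplMk hw := by subst h; rfl

/-- Transport of complement-components along a graph automorphism. -/
def mapCC (f : G ≃g G) {A B : Set V} (hAB : ∀ v, v ∈ A ↔ f v ∈ B) :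
    G.ComponentCompl A → G.ComponentCompl B :=
  ComponentCompl.lift
    (fun v hv => G.componentComplMk (K := B) (fun hB => hv ((hAB v).mpr hB)))
    (fun v w hv hw a => G.componentComplMk_eq_of_adj _ _ (f.map_rel_iff.mpr a))

lemma mem_mapCC (f : G ≃g G) {A B : Set V} (hAB : ∀ v, v ∈ A ↔ f v ∈ B)
    {C : G.ComponentCompl A} {v : V} (hv : v ∈ C) : (f v : V) ∈ mapCC f hAB C := by
  obtain ⟨hvA, rfl⟩ := hv
  exact ⟨fun hB => hvA ((hAB v).mpr hB), rfl⟩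

lemma mapCC_mapCC (f : G ≃g G) {A B : Set V} (hAB : ∀ v, v ∈ A ↔ f v ∈ B)
    (hBA : ∀ v, v ∈ B ↔ f.symm v ∈ A) (C : G.ComponentCompl A) :
    mapCC f.symm hBA (mapCC f hAB C) = C := by
  refine ComponentCompl.ind (fun v hv => ?_) C
  exact mk_congr (f.symm_apply_apply v) _ _

lemma mapCC_injective (f : G ≃g G) {A B : Set V} (hAB : ∀ v, v ∈ A ↔ f v ∈ B) :
    Function.Injective (mapCC f hAB) := by
  have hBA : ∀ v, v ∈ B ↔ f.symm v ∈ A := by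
    intro v
    rw [hAB (f.symm v), f.apply_symm_apply]
  exact Function.LeftInverse.injective (mapCC_mapCC f hAB hBA)

lemma mapCC_infinite (f : G ≃g G) {A B : Set V} (hAB : ∀ v, v ∈ A ↔ f v ∈ B)
    {C : G.ComponentCompl A} (hC : C.supp.Infinite) : (mapCC f hAB C).supp.Infinite := by
  refine Set.Infinite.mono ?_ (hC.image (f.injective.injOn))
  rintro _ ⟨v, hv, rfl⟩
  exact mem_mapCC f hAB hv




lemma ball_finite [LocallyFinite G] (hc : G.Connected) (v : V) :
    ∀ n : ℕ, {u | G.dist v u ≤ n}.Finite := by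
  intro n
  induction n with
  | zero =>
      apply Set.Finite.subset (Set.finite_singleton v)
      intro u hu
      simp only [Set.mem_setOf_eq, Nat.le_zero] at hu
      exact ((hc.dist_eq_zero_iff).mp hu).symm ▸ rfl
  | succ n ih =>
      apply Set.Finite.subset (ih.union (Set.Finite.biUnion ih
        (fun w _ => (G.neighborSet w).toFinite)))
      intro u hu
      simp only [Set.mem_setOf_eq] at hu
      by_cases h : G.dist v u ≤ n
      · exact Or.inl h
      · have hd : G.dist v u = n + 1 := le_antisymm hu (not_le.mp h)
        obtain ⟨p, hp⟩ := hc.exists_walk_length_eq_dist v u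
        rw [hd] at hp
        cases hq : p.reverse with
        | nil =>
            have := congrArg Walk.length hq
            rw [Walk.length_reverse, hp] at this
            simp at this
        | @cons _ w _ h' q =>
            have hlen : q.length = n := by
              have := congrArg Walk.length hq
              rw [Walk.length_reverse, hp] at this
              simpa using this.symm
            have hw : G.dist v w ≤ n := by
              have := G.dist_le q.reverse
              rwa [Walk.length_reverse, hlen] at this
            exact Or.inr (Set.mem_biUnion hw h'.symm)

lemma dist_map (hc : G.Connected) (f : G ≃g G) (u v : V) :
    G.dist (f u) (f v) = G.dist u v := by
  have key : ∀ (g : G ≃g G) (a b : V), G.dist (g a) (g b) ≤ G.dist a b := by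
    intro g a b
    obtain ⟨p, hp⟩ := hc.exists_walk_length_eq_dist a b
    calc G.dist (g a) (g b) ≤ (p.map g.toHom).length := G.dist_le _
      _ = p.length := Walk.length_map _ _
      _ = G.dist a b := hp
  refine le_antisymm (key f u v) ?_
  have := key f.symm (f u) (f v)
  simpa using this



lemma eq_of_mem_supp {K : Set V} {C : G.ComponentCompl K} {u : V} (h : u ∈ C) (h' : u ∉ K) :
    G.componentComplMk h' = C := by
  obtain ⟨h'', e⟩ := h
  exact e

lemma end_nonempty [LocallyFinite G] (hc : G.Connected) [Infinite V] : G.end.Nonempty := by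
  haveI : Fact G.Preconnected := ⟨hc.preconnected⟩
  haveI : ∀ j : (Finset V)ᵒᵖ, Finite (G.componentComplFunctor.obj j) :=
    fun j => G.componentCompl_finite j.unop
  haveI : ∀ j : (Finset V)ᵒᵖ, Nonempty (G.componentComplFunctor.obj j) :=
    fun j => G.componentCompl_nonempty_of_infinite j.unop
  exact nonempty_sections_of_finite_inverse_system _

lemma end_eval_infinite (e : G.end) (K : (Finset V)ᵒᵖ) :
    ((e : (j : (Finset V)ᵒᵖ) → G.componentComplFunctor.obj j) K).supp.Infinite := by
  refine (e.val K).infinite_iff_in_all_ranges.mpr fun L h => ?_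
  change Opposite.unop K ⊆ Opposite.unop (Opposite.op L) at h
  exact ⟨e.val (Opposite.op L), e.prop (CategoryTheory.opHomOfLE h)⟩

lemma eval_hom (e : G.end) {K L : Finset V} (h : K ≤ L) :
    (e.val (op L)).hom (Finset.coe_subset.mpr h) = e.val (op K) :=
  e.prop (opHomOfLE h)

lemma eval_ne_mono {e e' : G.end} {K L : Finset V} (h : K ≤ L)
    (hne : e.val (op K) ≠ e'.val (op K)) : e.val (op L) ≠ e'.val (op L) := fun hEq =>
  hne (by rw [← eval_hom e h, ← eval_hom e' h, hEq])

lemma exists_sep {e e' : G.end} (h : e ≠ e') :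
    ∃ K : Finset V, e.val (op K) ≠ e'.val (op K) := by
  by_contra hcon
  push_neg at hcon
  refine h (Subtype.ext (funext fun j => ?_))
  have := hcon j.unop
  rwa [Opposite.op_unop] at this

lemma exists_end_eval [LocallyFinite G] (hc : G.Connected) (K : Finset V)
    (C : G.ComponentCompl (K : Set V)) (hC : C.supp.Infinite) :
    ∃ e : G.end, e.val (op K) = C := by
  classical
  haveI : Fact G.Preconnected := ⟨hc.preconnected⟩
  let F' : (Finset V)ᵒᵖ ⥤ Type u :=
    { obj := fun L => {D : G.ComponentCompl ((K ∪ L.unop : Finset V) : Set V) //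
        D.supp.Infinite ∧ D.hom (Finset.coe_subset.mpr Finset.subset_union_left) = C}
      map := fun {L L'} φ => TypeCat.ofHom fun D =>
        ⟨D.val.hom (Finset.coe_subset.mpr
            (Finset.union_subset_union_right (le_of_op_hom φ))),
          ComponentCompl.hom_infinite _ _ D.prop.1, by
            rw [← ComponentCompl.hom_trans]
            exact D.prop.2⟩
      map_id := fun L => by refine ConcreteCategory.hom_ext _ _ fun D => ?_; refine Subtype.ext ?_; exact D.val.hom_refl
      map_comp := by
        intro L L' L'' φ ψ; refine ConcreteCategory.hom_ext _ _ fun D => ?_; refine Subtype.ext ?_; exact (D.val.hom_trans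
          (Finset.coe_subset.mpr (Finset.union_subset_union_right (le_of_op_hom φ)))
          (Finset.coe_subset.mpr (Finset.union_subset_union_right (le_of_op_hom ψ)))) }
  haveI : ∀ L, Finite (F'.obj L) := fun L => Subtype.finite
  haveI : ∀ L : (Finset V)ᵒᵖ, Nonempty (F'.obj L) := by
    intro L
    set M : Finset V := K ∪ L.unop with hM
    have hsM : (C.supp \ (M : Set V)).Infinite := hC.diff M.finite_toSet
    have hex : ∃ D : G.ComponentCompl (M : Set V),
        {v | v ∈ C.supp \ (M : Set V) ∧ v ∈ D.supp}.Infinite := by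
      by_contra hno
      push_neg at hno
      refine hsM (Set.Finite.subset (Set.finite_iUnion
        (ι := G.ComponentCompl (M : Set V)) hno) ?_)
      intro v hv
      exact Set.mem_iUnion.mpr ⟨G.componentComplMk (fun h => hv.2 h), hv,
        G.componentComplMk_mem _⟩
    obtain ⟨D, hD⟩ := hex
    obtain ⟨v, ⟨⟨hvC, hvM⟩, hvD⟩⟩ := hD.nonempty
    refine ⟨⟨D, ?_, ?_⟩⟩
    · exact hD.mono fun x hx => hx.2
    · rw [← eq_of_mem_supp hvD hvM, ComponentCompl.hom_mk]
      exact eq_of_mem_supp hvC _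
  obtain ⟨s, hs⟩ := nonempty_sections_of_finite_inverse_system F'
  refine ⟨⟨fun L => (s L).val.hom
      (Finset.coe_subset.mpr Finset.subset_union_right), ?_⟩, ?_⟩
  · intro L L' φ
    have hL : ((L.unop : Finset V) : Set V) ⊆ ((K ∪ L.unop : Finset V) : Set V) :=
      Finset.coe_subset.mpr Finset.subset_union_right
    have hL' : ((L'.unop : Finset V) : Set V) ⊆ ((K ∪ L'.unop : Finset V) : Set V) :=
      Finset.coe_subset.mpr Finset.subset_union_right
    have hphi : ((L'.unop : Finset V) : Set V) ⊆ ((L.unop : Finset V) : Set V) :=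
      Finset.coe_subset.mpr (le_of_op_hom φ)
    have hKphi : ((K ∪ L'.unop : Finset V) : Set V) ⊆ ((K ∪ L.unop : Finset V) : Set V) :=
      Finset.coe_subset.mpr (Finset.union_subset_union_right (le_of_op_hom φ))
    have hnat : (F'.map φ (s L)).val = (s L').val := congrArg Subtype.val (hs φ)
    change ((s L).val.hom hL).hom hphi = (s L').val.hom hL'
    rw [← (s L).val.hom_trans hL hphi, ← hnat]
    exact (s L).val.hom_trans hKphi hL'
  · exact (s (op K)).prop.2

theorem main_trichotomy {V : Type u} {G : SimpleGraph V} [LocallyFinite G] (hc : G.Connected)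
    {ι : Type*} (f : ι → G ≃g G) (v₀ : V)
    (horb : (Set.range fun i => f i v₀).Infinite) :
    G.end.Nonempty ∧ (Nat.card G.end = 1 ∨ Nat.card G.end = 2 ∨ Infinite G.end) := by
  classical
  haveI : Fact G.Preconnected := ⟨hc.preconnected⟩
  haveI : Infinite V := Set.infinite_univ_iff.mp (horb.mono (Set.subset_univ _))
  have hne : G.end.Nonempty := end_nonempty hc
  refine ⟨hne, ?_⟩
  rcases finite_or_infinite G.end with hfin | hinf
  swap
  · exact Or.inr (Or.inr hinf)
  haveI := hfin
  haveI : Nonempty G.end := hne.to_subtype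
  haveI : Fintype G.end := Fintype.ofFinite _
  by_contra hcon
  push_neg at hcon
  obtain ⟨hc1, hc2, _⟩ := hcon
  have h3 : 2 < Fintype.card G.end := by
    have h0 : 0 < Fintype.card G.end := Fintype.card_pos
    rw [Nat.card_eq_fintype_card] at hc1 hc2
    omega
  obtain ⟨e₁, e₂, e₃, h12, h13, h23⟩ := Fintype.two_lt_card_iff.mp h3
  -- a finset at which the evaluation of ends is injective
  have sep : ∀ e e' : G.end, ∃ K : Finset V, e ≠ e' → e.val (op K) ≠ e'.val (op K) := by
    intro e e'
    by_cases h : e = e'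
    · exact ⟨∅, fun h' => absurd h h'⟩
    · obtain ⟨K, hK⟩ := exists_sep h
      exact ⟨K, fun _ => hK⟩
  choose sepK hsepK using sep
  let K₀ : Finset V := Finset.univ.sup (fun p : G.end × G.end => sepK p.1 p.2)
  have hinj : ∀ L : Finset V, K₀ ≤ L →
      Function.Injective (fun e : G.end => e.val (op L)) := by
    intro L hL e e' hee
    by_contra hnee
    exact eval_ne_mono (le_trans (Finset.le_sup
        (f := fun p : G.end × G.end => sepK p.1 p.2) (Finset.mem_univ (e, e'))) hL)
      (hsepK e e' hnee) hee
  -- a big connected ball K around v₀ containing K₀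
  let R : ℕ := K₀.sup fun k => G.dist v₀ k
  let K : Finset V := (ball_finite hc v₀ R).toFinset
  have hmemK : ∀ u, u ∈ K ↔ G.dist v₀ u ≤ R := by
    intro u; simp [K, Set.Finite.mem_toFinset]
  have hK₀K : K₀ ≤ K := fun k hk => (hmemK k).mpr (Finset.le_sup hk)
  have hv₀K : v₀ ∈ K := (hmemK v₀).mpr (by rw [SimpleGraph.dist_self]; exact Nat.zero_le _)
  have hKwalk : ∀ u ∈ K, ∃ p : G.Walk v₀ u, ∀ x ∈ p.support, x ∈ K := by
    intro u hu
    obtain ⟨p, hp⟩ := hc.exists_walk_length_eq_dist v₀ u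
    refine ⟨p, fun x hx => (hmemK x).mpr ?_⟩
    calc G.dist v₀ x ≤ (p.takeUntil x hx).length := G.dist_le _
      _ ≤ p.length := Walk.length_takeUntil_le p hx
      _ = G.dist v₀ u := hp
      _ ≤ R := (hmemK u).mp hu
  -- an automorphism moving K entirely off itself
  obtain ⟨i, hi⟩ : ∃ i, ∀ x ∈ K, f i x ∉ K := by
    by_contra hcon2
    push_neg at hcon2
    refine horb (Set.Finite.subset (ball_finite hc v₀ (R + R)) ?_)
    rintro _ ⟨i, rfl⟩
    obtain ⟨x, hxK, hfxK⟩ := hcon2 i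
    have t1 : G.dist v₀ (f i x) ≤ R := (hmemK _).mp hfxK
    have t2 : G.dist (f i x) (f i v₀) = G.dist x v₀ := dist_map hc (f i) x v₀
    have t3 : G.dist x v₀ ≤ R := by rw [G.dist_comm]; exact (hmemK _).mp hxK
    have t4 := hc.dist_triangle (u := v₀) (v := f i x) (w := f i v₀)
    simp only [Set.mem_setOf_eq]
    omega
  set g : G ≃g G := f i with hg
  let gK : Finset V := K.image g
  have hKgK : ∀ x, x ∈ (K : Set V) ↔ g x ∈ (gK : Set V) := by
    intro x
    constructor
    · intro hx; exact Finset.mem_coe.mpr (Finset.mem_image_of_mem _ hx)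
    · intro hx
      obtain ⟨y, hy, hyx⟩ := Finset.mem_image.mp hx
      rwa [← g.injective hyx]
  have hdisjgK : ∀ x, x ∈ (gK : Set V) → x ∉ (K : Set V) := by
    intro x hx
    obtain ⟨y, hy, rfl⟩ := Finset.mem_image.mp hx
    exact hi y hy
  have hgKne : (gK : Set V).Nonempty := ⟨g v₀, (hKgK v₀).mp hv₀K⟩
  have hv₀gK : v₀ ∉ (gK : Set V) := fun h => hdisjgK v₀ h hv₀K
  set P : G.ComponentCompl (gK : Set V) := G.componentComplMk hv₀gK with hP
  have hKP : ∀ u (hu : u ∈ (K : Set V)),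
      G.componentComplMk (fun h => hdisjgK u h hu) = P := by
    intro u hu
    obtain ⟨p, hp⟩ := hKwalk u hu
    have hav : ∀ x ∈ p.support, x ∉ (gK : Set V) := fun x hx hgx => hdisjgK x hgx (hp x hx)
    exact (mk_eq_of_walk p hav).symm
  -- three distinct infinite components of the complement of gK
  have hdist3 : Function.Injective (fun e : G.end => e.val (op K)) := hinj K hK₀K
  set T : G.end → G.ComponentCompl (gK : Set V) := fun e => mapCC g hKgK (e.val (op K))
    with hT
  have hTinj : Function.Injective T := fun a b hab => hdist3 (mapCC_injective g hKgK hab)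
  have hTinf : ∀ e, (T e).supp.Infinite := fun e =>
    mapCC_infinite g hKgK (end_eval_infinite e (op K))
  have hDD : ∃ D₁ D₂ : G.ComponentCompl (gK : Set V), D₁ ≠ D₂ ∧ D₁ ≠ P ∧ D₂ ≠ P ∧
      D₁.supp.Infinite ∧ D₂.supp.Infinite := by
    by_cases hP1 : T e₁ = P
    · exact ⟨T e₂, T e₃, fun h => h23 (hTinj h), fun h => h12 (hTinj (h.trans hP1.symm)).symm,
        fun h => h13 (hTinj (h.trans hP1.symm)).symm, hTinf _, hTinf _⟩
    · by_cases hP2 : T e₂ = P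
      · exact ⟨T e₁, T e₃, fun h => h13 (hTinj h), fun h => h12 (hTinj (h.trans hP2.symm)),
          fun h => h23 (hTinj (h.trans hP2.symm)).symm, hTinf _, hTinf _⟩
      · exact ⟨T e₁, T e₂, fun h => h12 (hTinj h), hP1, hP2, hTinf _, hTinf _⟩
  obtain ⟨D₁, D₂, hD12, hD1P, hD2P, hD1i, hD2i⟩ := hDD
  have hD1K : ∀ x, x ∈ D₁ → x ∉ (K : Set V) := by
    intro x hx hxK
    exact hD1P ((eq_of_mem_supp hx (fun h => hdisjgK x h hxK)).symm.trans (hKP x hxK))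
  have hD2K : ∀ x, x ∈ D₂ → x ∉ (K : Set V) := by
    intro x hx hxK
    exact hD2P ((eq_of_mem_supp hx (fun h => hdisjgK x h hxK)).symm.trans (hKP x hxK))
  -- ends through D₁ and D₂
  obtain ⟨ε₁, hε₁⟩ := exists_end_eval hc gK D₁ hD1i
  obtain ⟨ε₂, hε₂⟩ := exists_end_eval hc gK D₂ hD2i
  have hεne : ε₁ ≠ ε₂ := fun h => hD12 (by rw [← hε₁, ← hε₂, h])
  set M : Finset V := K ∪ gK with hM
  have hKM : K ≤ M := Finset.subset_union_left
  have hgKM : gK ≤ M := Finset.subset_union_right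
  obtain ⟨u₁, hu₁M⟩ := (ε₁.val (op M)).nonempty
  obtain ⟨u₂, hu₂M⟩ := (ε₂.val (op M)).nonempty
  have hu₁K : u₁ ∈ ComponentCompl.supp (G := G) (K := (K : Set V)) (ε₁.val (op K)) := by
    have h := (ε₁.val (op M)).subset_hom (Finset.coe_subset.mpr hKM) hu₁M
    rwa [eval_hom ε₁ hKM] at h
  have hu₂K : u₂ ∈ ComponentCompl.supp (G := G) (K := (K : Set V)) (ε₂.val (op K)) := by
    have h := (ε₂.val (op M)).subset_hom (Finset.coe_subset.mpr hKM) hu₂M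
    rwa [eval_hom ε₂ hKM] at h
  have hu₁D : u₁ ∈ D₁ := by
    have h := (ε₁.val (op M)).subset_hom (Finset.coe_subset.mpr hgKM) hu₁M
    rwa [eval_hom ε₁ hgKM, hε₁] at h
  have hu₂D : u₂ ∈ D₂ := by
    have h := (ε₂.val (op M)).subset_hom (Finset.coe_subset.mpr hgKM) hu₂M
    rwa [eval_hom ε₂ hgKM, hε₂] at h
  -- boundary pairs
  obtain ⟨⟨a₁, b₁⟩, ha₁, hb₁, hab₁⟩ := D₁.exists_adj_boundary_pair hc.preconnected hgKne
  obtain ⟨⟨a₂, b₂⟩, ha₂, hb₂, hab₂⟩ := D₂.exists_adj_boundary_pair hc.preconnected hgKne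
  -- walk from b₁ to b₂ inside gK
  obtain ⟨k₁, hk₁K, hk₁⟩ := Finset.mem_image.mp (Finset.mem_coe.mp hb₁)
  obtain ⟨k₂, hk₂K, hk₂⟩ := Finset.mem_image.mp (Finset.mem_coe.mp hb₂)
  obtain ⟨p₁, hp₁⟩ := hKwalk k₁ hk₁K
  obtain ⟨p₂, hp₂⟩ := hKwalk k₂ hk₂K
  have hq : ∀ x ∈ (p₁.reverse.append p₂).support, x ∈ K := by
    intro x hx
    rw [Walk.mem_support_append_iff] at hx
    rcases hx with hx | hx
    · exact hp₁ x (by simpa using hx)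
    · exact hp₂ x hx
  have hqg : ∀ x ∈ ((p₁.reverse.append p₂).map g.toHom).support, x ∉ (K : Set V) := by
    intro x hx
    rw [Walk.support_map] at hx
    obtain ⟨y, hy, rfl⟩ := List.mem_map.mp hx
    exact hdisjgK _ ((hKgK y).mp (hq y hy))
  have e3 : G.componentComplMk (hqg _ (Walk.start_mem_support _)) =
      G.componentComplMk (hqg _ (Walk.end_mem_support _)) :=
    mk_eq_of_walk _ hqg
  -- assemble the chain of equalities
  have hu₁nK : u₁ ∉ (K : Set V) := hD1K u₁ hu₁D
  have hu₂nK : u₂ ∉ (K : Set V) := hD2K u₂ hu₂D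
  have ch : G.componentComplMk hu₁nK = G.componentComplMk hu₂nK := by
    have c1 : G.componentComplMk hu₁nK = G.componentComplMk (hD1K a₁ ha₁) :=
      mk_eq_of_mem_component hD1K hu₁D ha₁
    have c2 : G.componentComplMk (hD1K a₁ ha₁) = G.componentComplMk
        (fun h => hdisjgK b₁ hb₁ h) :=
      G.componentComplMk_eq_of_adj _ _ hab₁
    have c3 : G.componentComplMk (fun h => hdisjgK b₁ hb₁ h) =
        G.componentComplMk (hqg _ (Walk.start_mem_support _)) :=
      mk_congr hk₁.symm _ _
    have c4 : G.componentComplMk (hqg _ (Walk.end_mem_support _)) =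
        G.componentComplMk (fun h => hdisjgK b₂ hb₂ h) :=
      mk_congr hk₂ _ _
    have c5 : G.componentComplMk (fun h => hdisjgK b₂ hb₂ h) =
        G.componentComplMk (hD2K a₂ ha₂) :=
      (G.componentComplMk_eq_of_adj _ _ hab₂).symm
    have c6 : G.componentComplMk (hD2K a₂ ha₂) = G.componentComplMk hu₂nK :=
      (mk_eq_of_mem_component hD2K hu₂D ha₂).symm
    exact ((((c1.trans c2).trans c3).trans e3).trans c4).trans (c5.trans c6)
  have hval : ε₁.val (op K) = ε₂.val (op K) := by
    rw [← eq_of_mem_supp hu₁K hu₁nK, ← eq_of_mem_supp hu₂K hu₂nK]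
    exact ch
  exact hεne (hdist3 hval)


section Application
variable {G : Type u} [Group G]

lemma qmk_eq_iff (H : Subgroup G) {a b : G} :
    (Quotient.mk (QuotientGroup.rightRel H) a) = Quotient.mk (QuotientGroup.rightRel H) b ↔
      b * a⁻¹ ∈ H :=
  ⟨fun h => QuotientGroup.rightRel_apply.mp (Quotient.exact h),
   fun h => Quotient.sound (QuotientGroup.rightRel_apply.mpr h)⟩

private def mulQ {H : Subgroup G} (m : G) (hm : m ∈ Subgroup.normalizer (H : Set G)) :
    Quotient (QuotientGroup.rightRel H) → Quotient (QuotientGroup.rightRel H) :=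
  Quotient.lift (fun k => Quotient.mk (QuotientGroup.rightRel H) (m * k)) (by
    intro a b hab
    have hab' : b * a⁻¹ ∈ H := QuotientGroup.rightRel_apply.mp hab
    have h2 : m * (b * a⁻¹) * m⁻¹ ∈ H := (Subgroup.mem_normalizer_iff.mp hm _).mp hab'
    have he : (m * b) * (m * a)⁻¹ = m * (b * a⁻¹) * m⁻¹ := by group
    exact Quotient.sound (QuotientGroup.rightRel_apply.mpr (he ▸ h2)))

lemma mulQ_mk {H : Subgroup G} (m : G) (hm : m ∈ Subgroup.normalizer (H : Set G)) (k : G) :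
    mulQ m hm (Quotient.mk (QuotientGroup.rightRel H) k) =
      Quotient.mk (QuotientGroup.rightRel H) (m * k) := rfl

private def mulEquiv {H : Subgroup G} (m : G) (hm : m ∈ Subgroup.normalizer (H : Set G)) :
    Quotient (QuotientGroup.rightRel H) ≃ Quotient (QuotientGroup.rightRel H) where
  toFun := mulQ m hm
  invFun := mulQ m⁻¹ (inv_mem hm)
  left_inv := by
    refine Quotient.ind fun a => ?_
    rw [mulQ_mk, mulQ_mk, inv_mul_cancel_left]
  right_inv := by
    refine Quotient.ind fun a => ?_
    rw [mulQ_mk, mulQ_mk, mul_inv_cancel_left]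

lemma mulEquiv_apply {H : Subgroup G} (m : G) (hm : m ∈ Subgroup.normalizer (H : Set G))
    (x : Quotient (QuotientGroup.rightRel H)) : mulEquiv m hm x = mulQ m hm x := rfl

def autOf (S : Set G) {H : Subgroup G} (m : G) (hm : m ∈ Subgroup.normalizer (H : Set G)) :
    quotientGraph S H ≃g quotientGraph S H where
  toEquiv := mulEquiv m hm
  map_rel_iff' := by
    intro x y
    constructor
    · rintro ⟨hne, k, s, hs, hx, hy⟩
      have hx' : x = Quotient.mk (QuotientGroup.rightRel H) (m⁻¹ * k) := by
        rw [← mulQ_mk m⁻¹ (inv_mem hm) k, ← hx]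
        exact ((mulEquiv m hm).left_inv x).symm
      have hy' : y = Quotient.mk (QuotientGroup.rightRel H) ((m⁻¹ * k) * s) := by
        rw [mul_assoc, ← mulQ_mk m⁻¹ (inv_mem hm) (k * s), ← hy]
        exact ((mulEquiv m hm).left_inv y).symm
      exact ⟨fun h => hne (congrArg (mulEquiv m hm) h), m⁻¹ * k, s, hs, hx', hy'⟩
    · rintro ⟨hne, k, s, hs, rfl, rfl⟩
      refine ⟨(mulEquiv m hm).injective.ne hne, m * k, s, hs, ?_, ?_⟩
      · exact mulQ_mk m hm k
      · rw [mulEquiv_apply, mulQ_mk, mul_assoc]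

noncomputable def quotientGraph_locallyFinite (S : Set G) (H : Subgroup G) (hSfin : S.Finite) :
    LocallyFinite (quotientGraph S H) := by
  intro x
  apply Set.Finite.fintype
  refine Set.Finite.subset (Set.Finite.image
      (fun s => Quotient.mk (QuotientGroup.rightRel H) (Quotient.out x * s))
      (hSfin.union hSfin.inv)) ?_
  rintro y ⟨hne, k, s, hs, hxk, rfl⟩
  refine ⟨s, hs, ?_⟩
  have hk : k * (Quotient.out x)⁻¹ ∈ H := by
    rw [← qmk_eq_iff H, Quotient.out_eq]
    exact hxk
  rw [qmk_eq_iff]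
  have he : (k * s) * (Quotient.out x * s)⁻¹ = k * (Quotient.out x)⁻¹ := by group
  rwa [he]

lemma quotientGraph_connected (S : Set G) (H : Subgroup G)
    (hSgen : Subgroup.closure S = ⊤) : (quotientGraph S H).Connected := by
  have key : ∀ g : G, g ∈ Subgroup.closure S → ∀ k : G,
      (quotientGraph S H).Reachable (Quotient.mk (QuotientGroup.rightRel H) k)
        (Quotient.mk (QuotientGroup.rightRel H) (k * g)) := by
    intro g hg
    induction hg using Subgroup.closure_induction with
    | mem x hx =>
        intro k
        by_cases h : (Quotient.mk (QuotientGroup.rightRel H) k) =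
            Quotient.mk (QuotientGroup.rightRel H) (k * x)
        · rw [← h]
        · exact SimpleGraph.Adj.reachable ⟨h, k, x, Or.inl hx, rfl, rfl⟩
    | one => intro k; rw [mul_one]
    | mul x y hx hy ihx ihy =>
        intro k
        have h := (ihx k).trans (ihy (k * x))
        rwa [mul_assoc] at h
    | inv x hx ih =>
        intro k
        have h := (ih (k * x⁻¹)).symm
        rwa [inv_mul_cancel_right] at h
  haveI : Nonempty (Quotient (QuotientGroup.rightRel H)) := ⟨Quotient.mk _ 1⟩
  refine ⟨fun x y => ?_⟩
  refine Quotient.inductionOn₂ x y fun a b => ?_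
  have h := key (a⁻¹ * b) (by rw [hSgen]; exact Subgroup.mem_top _) a
  rwa [mul_inv_cancel_left] at h

end Application

end RelEnds

/-- If a subgroup `H` of a finitely generated group `G` has infinite index in its
normalizer, then the relative number of ends `e(G,H)` is `1`, `2` or `∞`. -/
theorem relative_ends_one_two_or_infinite {G : Type*} [Group G] (S : Set G)
    (hSfin : S.Finite) (hSgen : Subgroup.closure S = ⊤) (H : Subgroup G)
    (hinf : (H.subgroupOf (Subgroup.normalizer (H : Set G))).index = 0) :
    Nonempty (quotientGraph S H).end ∧
      (Nat.card (quotientGraph S H).end = 1 ∨ Nat.card (quotientGraph S H).end = 2 ∨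
        Infinite (quotientGraph S H).end) := by
  classical
  haveI := RelEnds.quotientGraph_locallyFinite S H hSfin
  have hc := RelEnds.quotientGraph_connected S H hSgen
  set N := Subgroup.normalizer (H : Set G) with hN
  let ψ : Quotient (QuotientGroup.rightRel (H.subgroupOf N)) →
      Quotient (QuotientGroup.rightRel H) :=
    Quotient.lift (fun n : N => Quotient.mk (QuotientGroup.rightRel H) (n : G)) (by
      intro a b hab
      have hab2 : b * a⁻¹ ∈ H.subgroupOf N := QuotientGroup.rightRel_apply.mp hab
      have hab3 : ((b : G)) * (a : G)⁻¹ ∈ H := by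
        have := Subgroup.mem_subgroupOf.mp hab2
        simpa using this
      exact Quotient.sound (QuotientGroup.rightRel_apply.mpr hab3))
  have hψinj : Function.Injective ψ := by
    intro a b
    refine Quotient.inductionOn₂ a b fun x y h => ?_
    have h2 : (y : G) * (x : G)⁻¹ ∈ H := QuotientGroup.rightRel_apply.mp (Quotient.exact h)
    refine Quotient.sound (QuotientGroup.rightRel_apply.mpr ?_)
    rw [Subgroup.mem_subgroupOf]
    simpa using h2
  haveI : Infinite (Quotient (QuotientGroup.rightRel (H.subgroupOf N))) := by
    have h0 : Nat.card (Quotient (QuotientGroup.rightRel (H.subgroupOf N))) = 0 := by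
      rw [Nat.card_congr (QuotientGroup.quotientRightRelEquivQuotientLeftRel _),
        ← Subgroup.index_eq_card]
      exact hinf
    rcases Nat.card_eq_zero.mp h0 with h | h
    · exact ((h.false (Quotient.mk _ (1 : N))).elim)
    · exact h
  have horb : (Set.range fun n : N => (RelEnds.autOf S (n : G) n.2)
      (Quotient.mk (QuotientGroup.rightRel H) 1)).Infinite := by
    have hfe : (fun n : N => (RelEnds.autOf S (n : G) n.2)
        (Quotient.mk (QuotientGroup.rightRel H) 1)) =
        ψ ∘ (Quotient.mk (QuotientGroup.rightRel (H.subgroupOf N))) := by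
      funext n
      show Quotient.mk (QuotientGroup.rightRel H) ((n : G) * 1) =
        Quotient.mk (QuotientGroup.rightRel H) (n : G)
      rw [mul_one]
    rw [hfe, Function.Surjective.range_comp Quotient.mk_surjective ψ]
    exact Set.infinite_range_of_injective hψinj
  obtain ⟨hne, htri⟩ := RelEnds.main_trichotomy hc
    (fun n : N => RelEnds.autOf S (n : G) n.2) (Quotient.mk _ 1) horb
  exact ⟨hne.to_subtype, htri⟩
end

section
/- (Serre's lemma) Let T be a tree and let G be a group acting on T by graph automorphisms. Suppose G is generated by finitely many elements s₁, …, s_m such that each s_i fixes some vertex of T and each product s_i s_j (1 ≤ i, j ≤ m) fixes some vertex of T. Then there exists a vertex of T fixed by every element of G. -/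
open SimpleGraph Walk

set_option linter.unusedSectionVars false

namespace SerreAux

variable {V : Type*} {T : SimpleGraph V} [DecidableEq V]

noncomputable def tpath (hT : T.IsTree) (u v : V) : T.Walk u v :=
  (hT.existsUnique_path u v).exists.choose

lemma tpath_isPath (hT : T.IsTree) (u v : V) : (tpath hT u v).IsPath :=
  (hT.existsUnique_path u v).exists.choose_spec

lemma tpath_uniq (hT : T.IsTree) {u v : V} (q : T.Walk u v) (hq : q.IsPath) :
    q = tpath hT u v := by
  obtain ⟨p, hp, hu⟩ := hT.existsUnique_path u v
  rw [hu q hq, hu _ (tpath_isPath hT u v)]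

lemma tpath_length (hT : T.IsTree) (u v : V) : (tpath hT u v).length = T.dist u v := by
  refine le_antisymm ?_ (SimpleGraph.dist_le _)
  obtain ⟨p, hp⟩ := hT.isConnected.exists_walk_length_eq_dist u v
  calc (tpath hT u v).length = p.bypass.length := by rw [tpath_uniq hT p.bypass p.bypass_isPath]
    _ ≤ p.length := p.length_bypass_le
    _ = T.dist u v := hp

lemma tpath_split (hT : T.IsTree) {u v m : V} (hm : m ∈ (tpath hT u v).support) :
    T.dist u m + T.dist m v = T.dist u v := by
  have h1 : ((tpath hT u v).takeUntil m hm).length = T.dist u m := by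
    rw [tpath_uniq hT _ ((tpath_isPath hT u v).takeUntil hm), tpath_length]
  have h2 : ((tpath hT u v).dropUntil m hm).length = T.dist m v := by
    rw [tpath_uniq hT _ ((tpath_isPath hT u v).dropUntil hm), tpath_length]
  rw [← h1, ← h2, ← Walk.length_append, Walk.take_spec, tpath_length]

lemma tpath_getVert (hT : T.IsTree) {u v m : V} (hm : m ∈ (tpath hT u v).support) :
    (tpath hT u v).getVert (T.dist u m) = m := by
  have h1 : ((tpath hT u v).takeUntil m hm).length = T.dist u m := by
    rw [tpath_uniq hT _ ((tpath_isPath hT u v).takeUntil hm), tpath_length]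
  conv_lhs => rw [← Walk.take_spec (tpath hT u v) hm]
  rw [Walk.getVert_append, ← h1]
  simp

lemma tpath_unique_dist (hT : T.IsTree) {u v m₁ m₂ : V} (h₁ : m₁ ∈ (tpath hT u v).support)
    (h₂ : m₂ ∈ (tpath hT u v).support) (hd : T.dist u m₁ = T.dist u m₂) : m₁ = m₂ := by
  rw [← tpath_getVert hT h₁, ← tpath_getVert hT h₂, hd]

lemma tpath_symm_mem (hT : T.IsTree) {u v m : V} (hm : m ∈ (tpath hT u v).support) :
    m ∈ (tpath hT v u).support := by
  rw [← tpath_uniq hT (tpath hT u v).reverse ((tpath_isPath hT u v).reverse)]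
  simp [Walk.support_reverse, hm]

lemma append_isPath {u v w : V} {p : T.Walk u v} {q : T.Walk v w}
    (hp : p.IsPath) (hq : q.IsPath)
    (hdisj : ∀ x, x ∈ p.support → x ∈ q.support → x = v) :
    (p.append q).IsPath := by
  have hqc : q.support = v :: q.support.tail := q.support_eq_cons
  have hqn : q.support.Nodup := hq.support_nodup
  rw [hqc] at hqn
  rw [Walk.isPath_def, Walk.support_append, List.nodup_append']
  refine ⟨hp.support_nodup, hqn.of_cons, fun x hx hx' => ?_⟩
  have hxq : x ∈ q.support := by rw [hqc]; exact List.mem_cons_of_mem _ hx'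
  have := hdisj x hx hxq
  subst this
  exact (List.nodup_cons.mp hqn).1 hx'

lemma median_aux (hT : T.IsTree) {a y : V} (p : T.Walk a y) (hp : p.IsPath) (z : V) :
    ∃ m, m ∈ p.support ∧ m ∈ (tpath hT a z).support ∧ m ∈ (tpath hT y z).support := by
  induction p with
  | nil => exact ⟨_, Walk.start_mem_support _, Walk.start_mem_support _,
      Walk.start_mem_support _⟩
  | @cons a b y hab p ih =>
    rw [Walk.cons_isPath_iff] at hp
    obtain ⟨hp', hanp⟩ := hp
    by_cases hmem : a ∈ (tpath hT y z).support
    · exact ⟨a, Walk.start_mem_support _, Walk.start_mem_support _, hmem⟩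
    · have hb : b ∈ (tpath hT a z).support := by
        by_cases hshare : ∃ w, w ∈ p.support ∧ w ∈ (tpath hT a z).support
        · obtain ⟨w, hw1, hw2⟩ := hshare
          have hP1 : (Walk.cons hab (p.takeUntil w hw1)).IsPath := by
            rw [Walk.cons_isPath_iff]
            exact ⟨hp'.takeUntil hw1, fun h => hanp (p.support_takeUntil_subset hw1 h)⟩
          have hP2 := (tpath_isPath hT a z).takeUntil hw2
          have heq : Walk.cons hab (p.takeUntil w hw1) = (tpath hT a z).takeUntil w hw2 := by
            rw [tpath_uniq hT _ hP1, tpath_uniq hT _ hP2]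
          have hbmem : b ∈ (Walk.cons hab (p.takeUntil w hw1)).support := by
            rw [Walk.support_cons]
            exact List.mem_cons_of_mem _ (Walk.start_mem_support _)
          rw [heq] at hbmem
          exact (tpath hT a z).support_takeUntil_subset hw2 hbmem
        · push_neg at hshare
          exfalso
          apply hmem
          have hW : ((Walk.cons hab p).reverse.append (tpath hT a z)).IsPath := by
            refine append_isPath ((Walk.isPath_reverse_iff _).mpr
              ((Walk.cons_isPath_iff hab p).mpr ⟨hp', hanp⟩)) (tpath_isPath hT a z) ?_
            intro x hx hx'
            rw [Walk.support_reverse, List.mem_reverse, Walk.support_cons] at hx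
            rcases List.mem_cons.mp hx with rfl | hx
            · rfl
            · exact absurd hx' (hshare x hx)
          rw [← tpath_uniq hT _ hW, Walk.mem_support_append_iff]
          left
          rw [Walk.support_reverse, List.mem_reverse, Walk.support_cons]
          exact List.mem_cons_self
      obtain ⟨m, hm1, hm2, hm3⟩ := ih hp'
      refine ⟨m, by rw [Walk.support_cons]; exact List.mem_cons_of_mem _ hm1, ?_, hm3⟩
      have hd := (tpath_isPath hT a z).dropUntil hb
      rw [← tpath_uniq hT _ hd] at hm2
      exact (tpath hT a z).support_dropUntil_subset hb hm2

lemma median (hT : T.IsTree) (x y z : V) :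
    ∃ m, m ∈ (tpath hT x y).support ∧ m ∈ (tpath hT x z).support ∧
      m ∈ (tpath hT y z).support :=
  median_aux hT (tpath hT x y) (tpath_isPath hT x y) z

def homOf (f : V ≃ V) (hf : ∀ u v, T.Adj u v → T.Adj (f u) (f v)) : T →g T :=
  ⟨f, fun h => hf _ _ h⟩

lemma dist_map_le (hT : T.IsTree) (f : V ≃ V) (hf : ∀ u v, T.Adj u v → T.Adj (f u) (f v))
    (a b : V) : T.dist (f a) (f b) ≤ T.dist a b := by
  calc T.dist (f a) (f b) ≤ ((tpath hT a b).map (homOf f hf)).length := SimpleGraph.dist_le _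
    _ = (tpath hT a b).length := Walk.length_map _ _
    _ = T.dist a b := tpath_length hT a b

lemma dist_map_eq (hT : T.IsTree) (f : V ≃ V) (hf : ∀ u v, T.Adj u v → T.Adj (f u) (f v))
    (hfs : ∀ u v, T.Adj u v → T.Adj (f.symm u) (f.symm v))
    (a b : V) : T.dist (f a) (f b) = T.dist a b := by
  refine le_antisymm (dist_map_le hT f hf a b) ?_
  have := dist_map_le hT f.symm hfs (f a) (f b)
  simpa using this

lemma mem_map (hT : T.IsTree) (f : V ≃ V) (hf : ∀ u v, T.Adj u v → T.Adj (f u) (f v))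
    {a b m : V} (hm : m ∈ (tpath hT a b).support) :
    f m ∈ (tpath hT (f a) (f b)).support := by
  have hmap : ((tpath hT a b).map (homOf f hf)).IsPath :=
    Walk.map_isPath_of_injective f.injective (tpath_isPath hT a b)
  have h2 : f m ∈ ((tpath hT a b).map (homOf f hf)).support := by
    rw [Walk.support_map]; exact List.mem_map_of_mem hm
  rw [tpath_uniq hT _ hmap] at h2
  exact h2

lemma fix_convex (hT : T.IsTree) (f : V ≃ V) (hf : ∀ u v, T.Adj u v → T.Adj (f u) (f v))
    {u v : V} (hu : f u = u) (hv : f v = v) {m : V} (hm : m ∈ (tpath hT u v).support) :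
    f m = m := by
  have key : (tpath hT u v).support.map f = (tpath hT u v).support := by
    have hmap : (((tpath hT u v).map (homOf f hf)).copy hu hv).IsPath := by
      erw [Walk.isPath_copy]
      exact Walk.map_isPath_of_injective f.injective (tpath_isPath hT u v)
    have H := tpath_uniq hT _ hmap
    calc (tpath hT u v).support.map f
        = (((tpath hT u v).map (homOf f hf)).copy hu hv).support := by
          erw [Walk.support_copy, Walk.support_map]; rfl
      _ = (tpath hT u v).support := by rw [H]
  obtain ⟨i, hi, rfl⟩ := List.mem_iff_getElem.mp hm
  have h2 := congrArg (fun l : List V => l[i]?) key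
  simp only [List.getElem?_map, List.getElem?_eq_getElem hi, Option.map_some] at h2
  exact Option.some_injective _ h2

lemma midfix (hT : T.IsTree) (f : V ≃ V) (hf : ∀ u v, T.Adj u v → T.Adj (f u) (f v))
    (hfs : ∀ u v, T.Adj u v → T.Adj (f.symm u) (f.symm v))
    {w : V} (hw : f w = w) (x : V) :
    ∃ m, m ∈ (tpath hT x (f x)).support ∧ f m = m ∧ 2 * T.dist x m = T.dist x (f x) := by
  obtain ⟨m, hmxy, hmxw, hmyw⟩ := median hT x (f x) w
  have hfm : f m ∈ (tpath hT (f x) (f w)).support := mem_map hT f hf hmxw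
  rw [hw] at hfm
  have h1 : m ∈ (tpath hT w (f x)).support := tpath_symm_mem hT hmyw
  have h2 : f m ∈ (tpath hT w (f x)).support := tpath_symm_mem hT hfm
  have hdw : T.dist w (f m) = T.dist w m := by
    have := dist_map_eq hT f hf hfs w m
    rwa [hw] at this
  have hmeq : m = f m := tpath_unique_dist hT h1 h2 hdw.symm
  refine ⟨m, hmxy, hmeq.symm, ?_⟩
  have hsplit := tpath_split hT hmxy
  have hxm : T.dist (f x) m = T.dist x m := by
    have := dist_map_eq hT f hf hfs x m
    rwa [← hmeq] at this
  have hcomm : T.dist m (f x) = T.dist (f x) m := SimpleGraph.dist_comm ..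
  omega

lemma twofix (hT : T.IsTree) (f g : V ≃ V)
    (hf : ∀ u v, T.Adj u v → T.Adj (f u) (f v))
    (hfs : ∀ u v, T.Adj u v → T.Adj (f.symm u) (f.symm v))
    (hg : ∀ u v, T.Adj u v → T.Adj (g u) (g v))
    (hgs : ∀ u v, T.Adj u v → T.Adj (g.symm u) (g.symm v))
    {wf wg x : V} (hwf : f wf = wf) (hwg : g wg = wg) (hx : f (g x) = x) :
    ∃ m, f m = m ∧ g m = m := by
  have hfsx : f.symm x = g x := by rw [Equiv.symm_apply_eq]; exact hx.symm
  have hwfs : f.symm wf = wf := by rw [Equiv.symm_apply_eq, hwf]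
  obtain ⟨m1, h1mem, h1fix, h1d⟩ := midfix hT g hg hgs hwg x
  obtain ⟨m2, h2mem, h2fix, h2d⟩ := midfix hT f.symm hfs
    (fun u v h => by simpa using hf u v h) hwfs x
  rw [hfsx] at h2mem h2d
  have hm12 : m1 = m2 := tpath_unique_dist hT h1mem h2mem (by omega)
  subst hm12
  refine ⟨m1, ?_, h1fix⟩
  rw [Equiv.symm_apply_eq] at h2fix
  exact h2fix.symm

lemma helly (hT : T.IsTree) (n : ℕ) (A : Fin n → Set V)
    (hconv : ∀ i, ∀ u ∈ A i, ∀ v ∈ A i, ∀ x ∈ (tpath hT u v).support, x ∈ A i)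
    (hpair : ∀ i j, (A i ∩ A j).Nonempty) :
    ∃ v, ∀ i, v ∈ A i := by
  induction n with
  | zero => exact ⟨hT.isConnected.nonempty.some, fun i => i.elim0⟩
  | succ k ih =>
    rcases Nat.eq_zero_or_pos k with rfl | hk
    · obtain ⟨v, hv, _⟩ := hpair 0 0
      exact ⟨v, fun i => (Fin.eq_zero i) ▸ hv⟩
    · set A' : Fin k → Set V := fun i => A i.succ ∩ A 0 with hA'
      have hconv' : ∀ i, ∀ u ∈ A' i, ∀ v ∈ A' i, ∀ x ∈ (tpath hT u v).support, x ∈ A' i :=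
        fun i u hu v hv x hx =>
          ⟨hconv i.succ u hu.1 v hv.1 x hx, hconv 0 u hu.2 v hv.2 x hx⟩
      have hpair' : ∀ i j, (A' i ∩ A' j).Nonempty := by
        intro i j
        obtain ⟨x, hx1, hx2⟩ := hpair j.succ 0
        obtain ⟨y, hy1, hy2⟩ := hpair i.succ 0
        obtain ⟨z, hz1, hz2⟩ := hpair i.succ j.succ
        obtain ⟨m, hmxy, hmxz, hmyz⟩ := median hT x y z
        exact ⟨m, ⟨⟨hconv i.succ y hy1 z hz1 m hmyz,
            hconv 0 x hx2 y hy2 m hmxy⟩,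
          ⟨hconv j.succ x hx1 z hz2 m hmxz,
            hconv 0 x hx2 y hy2 m hmxy⟩⟩⟩
      obtain ⟨v, hv⟩ := ih A' hconv' hpair'
      refine ⟨v, fun i => ?_⟩
      refine Fin.cases ?_ (fun j => ?_) i
      · exact (hv ⟨0, hk⟩).2
      · exact (hv j).1
end SerreAux

/-- **Serre's lemma.** If a group acting on a tree is generated by finitely many elements
such that each generator and each product of two generators fixes a vertex, then the
whole group fixes a vertex. -/
theorem serre_lemma {V G : Type*} [Group G] (T : SimpleGraph V) (hT : T.IsTree)
    (act : G →* Equiv.Perm V)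
    (hadj : ∀ (g : G) (u v : V), T.Adj u v → T.Adj (act g u) (act g v))
    (m : ℕ) (s : Fin m → G) (hgen : Subgroup.closure (Set.range s) = ⊤)
    (hell : ∀ i : Fin m, ∃ v : V, act (s i) v = v)
    (hellmul : ∀ i j : Fin m, ∃ v : V, act (s i * s j) v = v) :
    ∃ v : V, ∀ g : G, act g v = v := by
  classical
  have hsym : ∀ (g : G) (u v : V), T.Adj u v → T.Adj ((act g).symm u) ((act g).symm v) := by
    intro g u v h
    have : (act g).symm = ⇑(act g⁻¹) := by rw [map_inv]; rfl
    rw [this]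
    exact hadj g⁻¹ u v h
  set A : Fin m → Set V := fun i => {w | act (s i) w = w} with hA
  have hconv : ∀ i, ∀ u ∈ A i, ∀ v ∈ A i, ∀ x ∈ (SerreAux.tpath hT u v).support, x ∈ A i :=
    fun i u hu v hv x hx => SerreAux.fix_convex hT (act (s i)) (hadj (s i)) hu hv hx
  have hpair : ∀ i j, (A i ∩ A j).Nonempty := by
    intro i j
    obtain ⟨wf, hwf⟩ := hell i
    obtain ⟨wg, hwg⟩ := hell j
    obtain ⟨x, hx⟩ := hellmul i j
    rw [map_mul, Equiv.Perm.mul_apply] at hx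
    obtain ⟨w, hw1, hw2⟩ := SerreAux.twofix hT (act (s i)) (act (s j)) (hadj (s i))
      (hsym (s i)) (hadj (s j)) (hsym (s j)) hwf hwg hx
    exact ⟨w, hw1, hw2⟩
  obtain ⟨v, hv⟩ := SerreAux.helly hT m A hconv hpair
  refine ⟨v, fun g => ?_⟩
  have hS : ∀ g ∈ Subgroup.closure (Set.range s), act g v = v := by
    intro g hg
    refine Subgroup.closure_induction ?_ ?_ ?_ ?_ hg
    · rintro x ⟨i, rfl⟩
      exact hv i
    · simp
    · intro a b _ _ ha hb
      rw [map_mul, Equiv.Perm.mul_apply, hb, ha]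
    · intro a _ ha
      apply (act a).injective
      rw [ha, map_inv]
      exact Equiv.apply_symm_apply _ _
  exact hS g (hgen ▸ Subgroup.mem_top g)
end

section
/- Let T be a tree and let φ and ψ be automorphisms of T such that φ fixes some vertex of T, ψ fixes some vertex of T, and φ and ψ commute (φ ∘ ψ = ψ ∘ φ). Then φ and ψ have a common fixed vertex: there exists a vertex v of T with φ(v) = v and ψ(v) = v. -/
open SimpleGraph Walk

private lemma list_map_eq_self_aux {α : Type*} {f : α → α} :
    ∀ {l : List α}, l.map f = l → ∀ x ∈ l, f x = x := by
  intro l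
  induction l with
  | nil => simp
  | cons a t ih =>
    intro h x hx
    simp only [List.map_cons, List.cons.injEq] at h
    rcases List.mem_cons.mp hx with rfl | hx
    · exact h.1
    · exact ih h.2 x hx

private lemma tree_path_length {V : Type*} {T : SimpleGraph V} (hT : T.IsTree)
    {u v : V} (p : T.Walk u v) (hp : p.IsPath) : p.length = T.dist u v := by
  obtain ⟨q, hq, hlen⟩ := hT.isConnected.exists_path_of_dist u v
  rw [(hT.existsUnique_path u v).unique hp hq, hlen]

private lemma iso_dist_le {V : Type*} {T : SimpleGraph V} (hT : T.IsTree)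
    (φ : T ≃g T) (u v : V) : T.dist (φ u) (φ v) ≤ T.dist u v := by
  obtain ⟨p, _, hlen⟩ := hT.isConnected.exists_path_of_dist u v
  calc T.dist (φ u) (φ v) ≤ (p.map φ.toHom).length := SimpleGraph.dist_le _
    _ = p.length := Walk.length_map _ _
    _ = T.dist u v := hlen

private lemma iso_dist_eq {V : Type*} {T : SimpleGraph V} (hT : T.IsTree)
    (φ : T ≃g T) (u v : V) : T.dist (φ u) (φ v) = T.dist u v := by
  refine le_antisymm (iso_dist_le hT φ u v) ?_
  have := iso_dist_le hT φ.symm (φ u) (φ v)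
  simpa using this

/-- The fixed set of an automorphism of a tree is convex: every vertex on the
path between two fixed vertices is fixed. -/
private lemma fix_convex {V : Type*} {T : SimpleGraph V} (hT : T.IsTree)
    (φ : T ≃g T) {c c' x : V} (hc : φ c = c) (hc' : φ c' = c')
    (p : T.Walk c c') (hp : p.IsPath) (hx : x ∈ p.support) : φ x = x := by
  have hmp : ((p.map φ.toHom).copy hc hc').IsPath := by
    rw [Walk.isPath_copy]
    exact Walk.map_isPath_of_injective φ.injective hp
  have heq : (p.map φ.toHom).copy hc hc' = p :=
    (hT.existsUnique_path c c').unique hmp hp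
  have hsup : p.support.map φ = p.support := by
    conv_rhs => rw [← heq]
    rw [Walk.support_copy, Walk.support_map]
    rfl
  exact list_map_eq_self_aux hsup x hx

private lemma append_isPath {V : Type*} {T : SimpleGraph V} {u v w : V}
    {p : T.Walk u v} {q : T.Walk v w} (hp : p.IsPath) (hq : q.IsPath)
    (h : ∀ x, x ∈ p.support → x ∈ q.support → x = v) : (p.append q).IsPath := by
  rw [Walk.isPath_def, Walk.support_append, List.nodup_append]
  refine ⟨hp.support_nodup, hq.support_nodup.tail, ?_⟩
  intro x hxp y hxq hxy
  subst hxy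
  have hxv : x = v := h x hxp (List.mem_of_mem_tail hxq)
  have : v ∉ q.support.tail := by
    have := hq.support_nodup
    rw [q.support_eq_cons] at this
    exact (List.nodup_cons.mp this).1
  exact this (hxv ▸ hxq)

/-- Two commuting elliptic automorphisms of a tree have a common fixed vertex. -/
theorem commuting_elliptic_common_fixed_point {V : Type*} (T : SimpleGraph V)
    (hT : T.IsTree) (φ ψ : T ≃g T)
    (hφ : ∃ v : V, φ v = v) (hψ : ∃ v : V, ψ v = v)
    (hcomm : ∀ v : V, φ (ψ v) = ψ (φ v)) :
    ∃ v : V, φ v = v ∧ ψ v = v := by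
  classical
  obtain ⟨a, ha⟩ := hφ
  obtain ⟨b, hb⟩ := hψ
  have hconn := hT.isConnected
  -- choose a fixed point `c` of `φ` minimizing the distance to `b`
  obtain ⟨n, ⟨c, hc, hcd⟩, hnmin⟩ :=
    Nat.lt_wfRel.wf.has_min {n | ∃ c, φ c = c ∧ T.dist c b = n} ⟨_, a, ha, rfl⟩
  have hmin : ∀ c', φ c' = c' → T.dist c b ≤ T.dist c' b := by
    intro c' hc'
    by_contra hlt
    push_neg at hlt
    exact hnmin _ ⟨c', hc', rfl⟩ (hcd ▸ hlt)
  -- ψ c is also a fixed point of φ, at the same distance from b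
  have hcψ : φ (ψ c) = ψ c := by rw [hcomm c, hc]
  have hdψ : T.dist (ψ c) b = T.dist c b := by
    conv_lhs => rw [← hb]
    exact iso_dist_eq hT ψ c b
  -- it suffices to show ψ c = c
  refine ⟨c, hc, ?_⟩
  by_contra hne
  -- paths P : ψ c → c and Q : c → b
  obtain ⟨P, hP, _⟩ := hconn.exists_path_of_dist (ψ c) c
  obtain ⟨Q, hQ, _⟩ := hconn.exists_path_of_dist c b
  -- any vertex of Q fixed by φ equals c
  have hkey : ∀ x, x ∈ Q.support → φ x = x → x = c := by
    intro x hx hfx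
    have hsplit := congrArg Walk.length (Q.take_spec hx)
    rw [Walk.length_append] at hsplit
    have h1 : (Q.takeUntil x hx).length = T.dist c x :=
      tree_path_length hT _ (hQ.takeUntil hx)
    have h2 : (Q.dropUntil x hx).length = T.dist x b :=
      tree_path_length hT _ (hQ.dropUntil hx)
    have hQl : Q.length = T.dist c b := tree_path_length hT Q hQ
    have hsum : T.dist c x + T.dist x b = T.dist c b := by omega
    have hle := hmin x hfx
    have hzero : T.dist c x = 0 := by omega
    exact ((hconn.dist_eq_zero_iff).mp hzero).symm
  -- P and Q meet only at c
  have hdisj : ∀ x, x ∈ P.support → x ∈ Q.support → x = c := by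
    intro x hxP hxQ
    exact hkey x hxQ (fix_convex hT φ hcψ hc P hP hxP)
  -- hence P ++ Q is a path from ψ c to b
  have hPQ : (P.append Q).IsPath := append_isPath hP hQ hdisj
  have hlen : (P.append Q).length = T.dist (ψ c) b := tree_path_length hT _ hPQ
  rw [Walk.length_append] at hlen
  have hPl : P.length = T.dist (ψ c) c := tree_path_length hT P hP
  have hQl : Q.length = T.dist c b := tree_path_length hT Q hQ
  have hpos : 0 < T.dist (ψ c) c := hconn.pos_dist_of_ne hne
  omega
end
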